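/- arXiv:2011.14515 — 12 statements merged into one kernel-verified Lean document; each statement's English description precedes it below -/
import Mathlib

section
/- Let G be a countably infinite semigroup and let A ⊆ G. Then A is piecewise syndetic if and only if there exist a syndetic set S ⊆ G and a thick set T ⊆ G such that A = S ∩ T. -/
/-- A set `A` in a semigroup `G` is thick if for every finite `F ⊆ G`
there exists `g ∈ G` with `Fg ⊆ A`. -/
def Thick {G : Type*} [Semigroup G] (A : Set G) : Prop :=
  ∀ F : Finset G, ∃ g : G, ∀ f ∈ F, f * g ∈ A

/-- A set `A` in a semigroup `G` is syndetic if there is a finite `H ⊆ G`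
with `H⁻¹A = G`. -/
def Syndetic {G : Type*} [Semigroup G] (A : Set G) : Prop :=
  ∃ H : Finset G, ∀ x : G, ∃ h ∈ H, h * x ∈ A

/-- A set `A` in a semigroup `G` is piecewise syndetic if there is a finite
`H ⊆ G` such that `H⁻¹A = ⋃_{h ∈ H} h⁻¹A` is thick. -/
def PiecewiseSyndetic {G : Type*} [Semigroup G] (A : Set G) : Prop :=
  ∃ H : Finset G, Thick {x : G | ∃ h ∈ H, h * x ∈ A}

open scoped Pointwise in
/-- `A` is piecewise syndetic iff it is the intersection of a syndetic set
with a thick set. -/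
theorem piecewiseSyndetic_iff_inter {G : Type*} [Semigroup G] [Countable G] [Infinite G]
    (A : Set G) :
    PiecewiseSyndetic A ↔ ∃ S T : Set G, Syndetic S ∧ Thick T ∧ A = S ∩ T := by
  classical
  constructor
  · rintro ⟨H, hH⟩
    obtain ⟨g0⟩ : Nonempty G := inferInstance
    have hHne : H.Nonempty := by
      by_contra hne
      obtain ⟨g, hg⟩ := hH {g0}
      obtain ⟨h, hh, -⟩ := hg g0 (by simp)
      exact hne ⟨h, hh⟩
    obtain ⟨e, he⟩ := exists_surjective_nat G
    have hz : ∀ n : ℕ, ∃ z : G, ∀ i ≤ n, ∃ h ∈ H, h * (e i * z) ∈ A := by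
      intro n
      obtain ⟨z, hz⟩ := hH ((Finset.range (n + 1)).image e)
      exact ⟨z, fun i hi => hz (e i)
        (Finset.mem_image_of_mem e (Finset.mem_range.2 (Nat.lt_succ_of_le hi)))⟩
    choose z hzspec using hz
    set T : Set G := {y | ∃ n, ∃ i ≤ n, y = e i * z n} with hTdef
    have hTsub : ∀ y ∈ T, ∃ h ∈ H, h * y ∈ A := by
      rintro y ⟨n, i, hi, rfl⟩
      exact hzspec n i hi
    have hTthick : Thick T := by
      intro F
      choose idx hidx using fun f : G => he f
      refine ⟨z (F.sup idx), fun f hf => ?_⟩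
      exact ⟨F.sup idx, idx f, Finset.le_sup hf, by rw [hidx f]⟩
    refine ⟨A ∪ (T ∪ A)ᶜ, T ∪ A, ?_, ?_, ?_⟩
    · refine ⟨H ∪ H * H, fun x => ?_⟩
      by_cases hc : ∃ h ∈ H, h * x ∈ A
      · obtain ⟨h, hh, hhx⟩ := hc
        exact ⟨h, Finset.mem_union_left _ hh, Or.inl hhx⟩
      · push_neg at hc
        by_cases hc2 : ∃ h ∈ H, h * x ∉ T
        · obtain ⟨h, hh, hhx⟩ := hc2
          refine ⟨h, Finset.mem_union_left _ hh, Or.inr ?_⟩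
          intro hmem
          rcases hmem with hmem | hmem
          · exact hhx hmem
          · exact hc h hh hmem
        · push_neg at hc2
          obtain ⟨h0, hh0⟩ := hHne
          obtain ⟨h1, hh1, hA⟩ := hTsub (h0 * x) (hc2 h0 hh0)
          refine ⟨h1 * h0, Finset.mem_union_right _ (Finset.mul_mem_mul hh1 hh0), ?_⟩
          exact Or.inl (by rwa [mul_assoc])
    · intro F
      obtain ⟨g, hg⟩ := hTthick F
      exact ⟨g, fun f hf => Or.inl (hg f hf)⟩
    · ext x
      constructor
      · intro hx
        exact ⟨Or.inl hx, Or.inr hx⟩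
      · rintro ⟨hS, hT'⟩
        rcases hS with hS | hS
        · exact hS
        · exact absurd hT' hS
  · rintro ⟨S, T, ⟨H, hS⟩, hT, rfl⟩
    refine ⟨H, fun F => ?_⟩
    obtain ⟨g, hg⟩ := hT (H * F)
    refine ⟨g, fun f hf => ?_⟩
    obtain ⟨h, hh, hhS⟩ := hS (f * g)
    refine ⟨h, hh, hhS, ?_⟩
    have := hg (h * f) (Finset.mul_mem_mul hh hf)
    rwa [mul_assoc] at this
end

section
/- Let G be a countably infinite semigroup and suppose A ⊆ G is piecewise syndetic. Then for any partition A = C_1 ∪ ⋯ ∪ C_r of A into finitely many pairwise disjoint sets, there exists some i ∈ {1, …, r} for which C_i is piecewise syndetic. -/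
lemma thick_mono {G : Type*} [Semigroup G] {A B : Set G} (h : A ⊆ B) (hA : Thick A) :
    Thick B := by
  intro F
  obtain ⟨g, hg⟩ := hA F
  exact ⟨g, fun f hf => h (hg f hf)⟩

lemma ps_mono {G : Type*} [Semigroup G] {A B : Set G} (h : A ⊆ B) (hA : PiecewiseSyndetic A) :
    PiecewiseSyndetic B := by
  obtain ⟨H, hH⟩ := hA
  refine ⟨H, thick_mono ?_ hH⟩
  rintro x ⟨k, hk, hkx⟩
  exact ⟨k, hk, h hkx⟩

lemma thick_ps {G : Type*} [Semigroup G] [Nonempty G] {A : Set G} (hA : Thick A) :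
    PiecewiseSyndetic A := by
  classical
  obtain ⟨h⟩ := ‹Nonempty G›
  refine ⟨{h}, fun F => ?_⟩
  obtain ⟨g, hg⟩ := hA (F.image (fun f => h * f))
  refine ⟨g, fun f hf => ⟨h, Finset.mem_singleton_self h, ?_⟩⟩
  have := hg (h * f) (Finset.mem_image_of_mem _ hf)
  rwa [mul_assoc] at this

/-- Key lemma: if a thick set is covered by `B₁ ∪ B₂` and `B₁` is not
piecewise syndetic, then `B₂` is thick. -/
lemma key_thick {G : Type*} [Semigroup G] {T B₁ B₂ : Set G} (hT : Thick T)
    (hcov : T ⊆ B₁ ∪ B₂) (h1 : ¬ PiecewiseSyndetic B₁) : Thick B₂ := by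
  classical
  intro E
  have hE : ¬ Thick {x : G | ∃ e ∈ E, e * x ∈ B₁} := fun h => h1 ⟨E, h⟩
  rw [Thick] at hE
  push_neg at hE
  obtain ⟨F, hF⟩ := hE
  obtain ⟨g₀, hg₀⟩ := hT (Finset.image₂ (· * ·) E F)
  obtain ⟨f, hfF, hf⟩ := hF g₀
  simp only [Set.mem_setOf_eq, not_exists] at hf
  push_neg at hf
  refine ⟨f * g₀, fun e he => ?_⟩
  have hmem : e * (f * g₀) ∈ T := by
    have := hg₀ (e * f) (Finset.mem_image₂_of_mem he hfF)
    rwa [mul_assoc] at this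
  rcases hcov hmem with h | h
  · exact absurd h (hf e he)
  · exact h

lemma ps_of_ps_preimage {G : Type*} [Semigroup G] {A : Set G} (H : Finset G)
    (h : PiecewiseSyndetic {x : G | ∃ h ∈ H, h * x ∈ A}) : PiecewiseSyndetic A := by
  classical
  obtain ⟨K, hK⟩ := h
  refine ⟨Finset.image₂ (· * ·) H K, thick_mono ?_ hK⟩
  rintro x ⟨k, hk, h', hh', hhx⟩
  exact ⟨h' * k, Finset.mem_image₂_of_mem hh' hk, by rwa [mul_assoc]⟩

lemma ps_union {G : Type*} [Semigroup G] [Nonempty G] {A B : Set G}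
    (h : PiecewiseSyndetic (A ∪ B)) : PiecewiseSyndetic A ∨ PiecewiseSyndetic B := by
  obtain ⟨H, hH⟩ := h
  by_cases h1 : PiecewiseSyndetic {x : G | ∃ h ∈ H, h * x ∈ A}
  · exact Or.inl (ps_of_ps_preimage H h1)
  · right
    refine ps_of_ps_preimage H (thick_ps (key_thick hH ?_ h1))
    rintro x ⟨h', hh', hx⟩
    rcases hx with hx | hx
    · exact Or.inl ⟨h', hh', hx⟩
    · exact Or.inr ⟨h', hh', hx⟩

lemma ps_iUnion {G : Type*} [Semigroup G] [Nonempty G] : ∀ (r : ℕ) (C : Fin r → Set G),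
    PiecewiseSyndetic (⋃ i, C i) → ∃ i, PiecewiseSyndetic (C i) := by
  intro r
  induction r with
  | zero =>
      intro C hC
      exfalso
      obtain ⟨H, hH⟩ := hC
      obtain ⟨a⟩ := ‹Nonempty G›
      obtain ⟨g, hg⟩ := hH {a}
      obtain ⟨h, _, hh⟩ := hg a (Finset.mem_singleton_self a)
      simp at hh
  | succ n ih =>
      intro C hC
      have hsplit : (⋃ i, C i) = C 0 ∪ ⋃ i : Fin n, C i.succ := by
        ext x
        simp only [Set.mem_iUnion, Set.mem_union]
        constructor
        · rintro ⟨i, hi⟩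
          rcases Fin.eq_zero_or_eq_succ i with h | ⟨j, rfl⟩
          · exact Or.inl (h ▸ hi)
          · exact Or.inr ⟨j, hi⟩
        · rintro (h | ⟨j, hj⟩)
          · exact ⟨0, h⟩
          · exact ⟨j.succ, hj⟩
      rw [hsplit] at hC
      rcases ps_union hC with h | h
      · exact ⟨0, h⟩
      · obtain ⟨j, hj⟩ := ih _ h
        exact ⟨j.succ, hj⟩

/-- Piecewise syndeticity is partition regular: if a piecewise syndetic `A`
is partitioned into finitely many pairwise disjoint sets `C 1, …, C r`, then
some `C i` is piecewise syndetic. -/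
theorem piecewiseSyndetic_partition_regular {G : Type*} [Semigroup G] [Countable G] [Infinite G]
    (A : Set G) (hA : PiecewiseSyndetic A) (r : ℕ) (C : Fin r → Set G)
    (hdisj : ∀ i j, i ≠ j → Disjoint (C i) (C j))
    (hunion : A = ⋃ i, C i) :
    ∃ i, PiecewiseSyndetic (C i) := by
  exact ps_iUnion r C (hunion ▸ hA)
end

section
/- Let G be a countably infinite semigroup and suppose a family 𝒜 of subsets of G satisfies: (a) 𝒜 contains every thick subset of G; (b) 𝒜 is partition regular, i.e., whenever A ∈ 𝒜 and A = C_1 ∪ ⋯ ∪ C_r is a partition into finitely many pairwise disjoint sets, at least one C_i belongs to 𝒜; (c) if B ⊆ A ⊆ G and B ∈ 𝒜 then A ∈ 𝒜; and (d) if A ∈ 𝒜 and g ∈ G then gA ∈ 𝒜, where gA = {ga : a ∈ A}. Then 𝒜 contains every piecewise syndetic subset of G. -/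
/-!
If `A` is piecewise syndetic, then `⋃_{h ∈ H} h⁻¹A` is thick for some finite `H`, hence lies in
`𝒜`. Partition regularity together with upward closure says that some member of a finite
cover of a set of `𝒜` lies in `𝒜` (disjointify the cover first), so `h⁻¹A ∈ 𝒜` for some `h ∈ H`.
Finally `h(h⁻¹A) ⊆ A`, so `A ∈ 𝒜` by shift invariance and upward closure.
-/

section PartitionRegular

variable {α : Type*} {𝒜 : Set (Set α)}

theorem exists_mem_of_iUnion_fin_mem
    (hpr : ∀ A ∈ 𝒜, ∀ (r : ℕ) (C : Fin r → Set α),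
      (∀ i j, i ≠ j → Disjoint (C i) (C j)) → A = ⋃ i, C i → ∃ i, C i ∈ 𝒜)
    (hup : ∀ A B : Set α, B ⊆ A → B ∈ 𝒜 → A ∈ 𝒜)
    {r : ℕ} (B : Fin r → Set α) (hB : ⋃ i, B i ∈ 𝒜) : ∃ i, B i ∈ 𝒜 := by
  obtain ⟨i, hi⟩ := hpr _ hB r (disjointed B) (fun _ _ hij => disjoint_disjointed B hij)
    iUnion_disjointed.symm
  exact ⟨i, hup _ _ (disjointed_subset B i) hi⟩

theorem exists_mem_of_biUnion_finset_mem
    (hpr : ∀ A ∈ 𝒜, ∀ (r : ℕ) (C : Fin r → Set α),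
      (∀ i j, i ≠ j → Disjoint (C i) (C j)) → A = ⋃ i, C i → ∃ i, C i ∈ 𝒜)
    (hup : ∀ A B : Set α, B ⊆ A → B ∈ 𝒜 → A ∈ 𝒜)
    {ι : Type*} (s : Finset ι) (B : ι → Set α) (hB : ⋃ i ∈ s, B i ∈ 𝒜) :
    ∃ i ∈ s, B i ∈ 𝒜 := by
  have hB' : ⋃ k, B (s.equivFin.symm k) ∈ 𝒜 := by
    rwa [s.equivFin.symm.surjective.iUnion_comp (fun i => B i), Set.iUnion_subtype]
  obtain ⟨k, hk⟩ := exists_mem_of_iUnion_fin_mem hpr hup _ hB'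
  exact ⟨_, (s.equivFin.symm k).2, hk⟩

end PartitionRegular

theorem mem_of_piecewiseSyndetic_general {G : Type*} [Semigroup G]
    (𝒜 : Set (Set G))
    (hthick : ∀ A : Set G, Thick A → A ∈ 𝒜)
    (hpr : ∀ A ∈ 𝒜, ∀ (r : ℕ) (C : Fin r → Set G),
      (∀ i j, i ≠ j → Disjoint (C i) (C j)) → A = ⋃ i, C i → ∃ i, C i ∈ 𝒜)
    (hup : ∀ A B : Set G, B ⊆ A → B ∈ 𝒜 → A ∈ 𝒜)
    (hshift : ∀ A ∈ 𝒜, ∀ g : G, (fun x => g * x) '' A ∈ 𝒜)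
    (A : Set G) (hA : PiecewiseSyndetic A) :
    A ∈ 𝒜 := by
  obtain ⟨H, hH⟩ := hA
  have hcover : ⋃ h ∈ H, (h * ·) ⁻¹' A ∈ 𝒜 := by
    refine hthick _ ?_
    convert hH using 1
    ext x
    simp
  obtain ⟨h, -, hh⟩ := exists_mem_of_biUnion_finset_mem hpr hup H _ hcover
  exact hup A _ (Set.image_preimage_subset _ A) (hshift _ hh h)

/-- If a family `𝒜` of subsets of a countably infinite semigroup `G`
(a) contains all thick sets, (b) is partition regular, (c) is upward closed,
and (d) is closed under left shifts `A ↦ gA`, then `𝒜` contains every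
piecewise syndetic subset of `G`. -/
theorem mem_of_piecewiseSyndetic {G : Type*} [Semigroup G] [Countable G] [Infinite G]
    (𝒜 : Set (Set G))
    (hthick : ∀ A : Set G, Thick A → A ∈ 𝒜)
    (hpr : ∀ A ∈ 𝒜, ∀ (r : ℕ) (C : Fin r → Set G),
      (∀ i j, i ≠ j → Disjoint (C i) (C j)) → A = ⋃ i, C i → ∃ i, C i ∈ 𝒜)
    (hup : ∀ A B : Set G, B ⊆ A → B ∈ 𝒜 → A ∈ 𝒜)
    (hshift : ∀ A ∈ 𝒜, ∀ g : G, (fun x => g * x) '' A ∈ 𝒜)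
    (A : Set G) (hA : PiecewiseSyndetic A) :
    A ∈ 𝒜 :=
  mem_of_piecewiseSyndetic_general 𝒜 hthick hpr hup hshift A hA
end

section
/- Let (a_n)_{n∈ℕ} be a sequence of positive integers satisfying Σ_{n∈ℕ} 1/a_n < 1, and let A = ℕ \ ⋃_{n∈ℕ} (a_nℕ + (n−1)), where a_nℕ = {a_n k : k ∈ ℕ}. Then A is not piecewise syndetic in the additive semigroup (ℕ, +), and the lower density of A with respect to the Følner sequence Φ_N = {1, …, N} is at least 1 − Σ_{n∈ℕ} 1/a_n > 0 (in particular A is discordant). -/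
open Filter

/-- A set of positive integers is thick if it contains arbitrarily long
intervals of consecutive positive integers. -/
def ThickNat (A : Set ℕ) : Prop :=
  ∀ l : ℕ, ∃ a : ℕ, 0 < a ∧ ∀ i < l, a + i ∈ A

/-- A set `A` of positive integers is piecewise syndetic in `(ℕ, +)` if there
are finitely many positive translates `t` such that the union of the sets
`A − t = {x : x + t ∈ A}` is thick. -/
def PiecewiseSyndeticNat (A : Set ℕ) : Prop :=
  ∃ t : Finset ℕ, (∀ x ∈ t, 0 < x) ∧
    ThickNat {y : ℕ | 0 < y ∧ ∃ x ∈ t, y + x ∈ A}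

open Classical in
/-- Straus' construction: if `(a n)` are positive integers with
`Σ 1/(a n) < 1`, then `A = ℕ \ ⋃ₙ (aₙℕ + n)` (here `n` runs over `0,1,2,…`,
corresponding to the shifts `n − 1` for `n = 1,2,…`) is not piecewise
syndetic in `(ℕ,+)`, while its lower density along `Φ_N = {1,…,N}` is at
least `1 − Σ 1/(a n) > 0`; in particular `A` is discordant. -/
theorem straus_construction (a : ℕ → ℕ) (hpos : ∀ n, 0 < a n)
    (hsummable : Summable (fun n => (1 : ℝ) / a n))
    (hsum : ∑' n, (1 : ℝ) / a n < 1)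
    (A : Set ℕ)
    (hA : A = {x : ℕ | 0 < x} \ ⋃ n : ℕ, {x : ℕ | ∃ k : ℕ, 0 < k ∧ x = a n * k + n}) :
    ¬ PiecewiseSyndeticNat A ∧
    (1 - ∑' n, (1 : ℝ) / a n) ≤
      liminf (fun N : ℕ =>
        (((Finset.Icc 1 N).filter (fun x => x ∈ A)).card : ℝ) / N) atTop ∧
    0 < liminf (fun N : ℕ =>
        (((Finset.Icc 1 N).filter (fun x => x ∈ A)).card : ℝ) / N) atTop := by
  have hmemA : ∀ x : ℕ, x ∈ A ↔ 0 < x ∧ ∀ n k : ℕ, 0 < k → x ≠ a n * k + n := by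
    intro x
    subst hA
    simp only [Set.mem_diff, Set.mem_iUnion, Set.mem_setOf_eq, not_exists, not_and]
  constructor
  · -- not piecewise syndetic
    rintro ⟨t, ht, hthick⟩
    set L : ℕ := t.lcm a with hLdef
    have hL : 0 < L := by
      rcases Nat.eq_zero_or_pos L with h0 | h
      · exfalso
        have := Finset.lcm_eq_zero_iff.mp h0
        obtain ⟨x, -, hx0⟩ := this
        have := hpos x
        omega
      · exact h
    obtain ⟨a0, ha0, hint⟩ := hthick L
    -- find a positive multiple of L in [a0, a0 + L)
    obtain ⟨k, i, hk, hiL, hki⟩ : ∃ k i : ℕ, 0 < k ∧ i < L ∧ a0 + i = L * k := by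
      obtain ⟨q, r, hr, ha0e⟩ : ∃ q r, r < L ∧ a0 = L * q + r :=
        ⟨a0 / L, a0 % L, Nat.mod_lt _ hL, (Nat.div_add_mod a0 L).symm⟩
      by_cases hr0 : r = 0
      · refine ⟨q, 0, ?_, hL, by omega⟩
        rcases Nat.eq_zero_or_pos q with hq | hq
        · subst hq
          simp only [Nat.mul_zero, Nat.zero_add] at ha0e
          omega
        · exact hq
      · have hmul : L * (q + 1) = L * q + L := by ring
        exact ⟨q + 1, L - r, Nat.succ_pos q, by omega, by omega⟩
    have hmem := hint i hiL
    rw [hki] at hmem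
    obtain ⟨-, x, hx, hxA⟩ := hmem
    rw [hmemA] at hxA
    obtain ⟨-, h2⟩ := hxA
    have hdvd : a x ∣ L := Finset.dvd_lcm hx
    have hax : 0 < L / a x := Nat.div_pos (Nat.le_of_dvd hL hdvd) (hpos x)
    refine h2 x ((L / a x) * k) (Nat.mul_pos hax hk) ?_
    have : a x * (L / a x) = L := Nat.mul_div_cancel' hdvd
    calc L * k + x = a x * (L / a x) * k + x := by rw [this]
      _ = a x * (L / a x * k) + x := by ring
  · -- density bound
    set c : ℝ := ∑' n, (1 : ℝ) / a n with hcdef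
    set f : ℕ → ℝ := fun N =>
      (((Finset.Icc 1 N).filter (fun x => x ∈ A)).card : ℝ) / N with hfdef
    have hcard : ∀ N : ℕ, (Finset.Icc 1 N).card = N := by
      intro N; rw [Nat.card_Icc]; omega
    have key : ∀ N : ℕ, 1 ≤ N → 1 - c ≤ f N := by
      intro N hN
      have hNpos : (0 : ℝ) < N := by exact_mod_cast hN
      set F := (Finset.Icc 1 N).filter (fun x => x ∈ A) with hF
      set G := (Finset.Icc 1 N).filter (fun x => ¬ x ∈ A) with hG
      have hFG : F.card + G.card = N := by
        rw [hF, hG, Finset.card_filter_add_card_filter_not, hcard]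
      have hGsub : G ⊆ (Finset.range N).biUnion (fun n =>
          (Finset.Icc 1 N).filter (fun x => ∃ k : ℕ, 0 < k ∧ x = a n * k + n)) := by
        intro x hxG
        rw [hG, Finset.mem_filter] at hxG
        obtain ⟨hxI, hxA⟩ := hxG
        rw [Finset.mem_Icc] at hxI
        rw [hmemA] at hxA
        push_neg at hxA
        obtain ⟨n, k, hk, hxe⟩ := hxA (by omega)
        have hank : 0 < a n * k := Nat.mul_pos (hpos n) hk
        rw [Finset.mem_biUnion]
        exact ⟨n, Finset.mem_range.mpr (by omega),
          Finset.mem_filter.mpr ⟨Finset.mem_Icc.mpr hxI, k, hk, hxe⟩⟩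
      have hcount : ∀ n : ℕ,
          ((Finset.Icc 1 N).filter (fun x => ∃ k : ℕ, 0 < k ∧ x = a n * k + n)).card
            ≤ N / a n := by
        intro n
        have hsub : (Finset.Icc 1 N).filter (fun x => ∃ k : ℕ, 0 < k ∧ x = a n * k + n)
            ⊆ (Finset.Icc 1 (N / a n)).image (fun k => a n * k + n) := by
          intro x hx
          rw [Finset.mem_filter, Finset.mem_Icc] at hx
          obtain ⟨⟨-, hxN⟩, k, hk, hxe⟩ := hx
          rw [Finset.mem_image]
          refine ⟨k, Finset.mem_Icc.mpr ⟨hk, ?_⟩, hxe.symm⟩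
          rw [Nat.le_div_iff_mul_le (hpos n), mul_comm]
          omega
        calc _ ≤ ((Finset.Icc 1 (N / a n)).image (fun k => a n * k + n)).card :=
              Finset.card_le_card hsub
          _ ≤ (Finset.Icc 1 (N / a n)).card := Finset.card_image_le
          _ = N / a n := hcard _
      have hGle : (G.card : ℝ) ≤ N * c := by
        have h1 : G.card ≤ ∑ n ∈ Finset.range N, N / a n :=
          le_trans (Finset.card_le_card hGsub)
            (le_trans Finset.card_biUnion_le (Finset.sum_le_sum fun n _ => hcount n))
        have h2 : ((∑ n ∈ Finset.range N, N / a n : ℕ) : ℝ)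
            ≤ ∑ n ∈ Finset.range N, (N : ℝ) * (1 / a n) := by
          rw [Nat.cast_sum]
          refine Finset.sum_le_sum fun n _ => ?_
          rw [mul_one_div]
          exact Nat.cast_div_le
        have h3 : ∑ n ∈ Finset.range N, (N : ℝ) * (1 / a n) ≤ N * c := by
          rw [← Finset.mul_sum]
          refine mul_le_mul_of_nonneg_left ?_ (le_of_lt hNpos)
          exact Summable.sum_le_tsum (Finset.range N) (fun n _ => by positivity) hsummable
        calc (G.card : ℝ) ≤ _ := by exact_mod_cast h1
          _ ≤ _ := h2
          _ ≤ _ := h3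
      have hFcast : (F.card : ℝ) = N - G.card := by
        have := hFG
        have : (F.card : ℝ) + G.card = N := by exact_mod_cast this
        linarith
      have hfN : f N = (F.card : ℝ) / N := rfl
      rw [hfN, le_div_iff₀ hNpos, hFcast]
      nlinarith
    have hub : ∀ N : ℕ, f N ≤ 1 := by
      intro N
      rcases Nat.eq_zero_or_pos N with h | h
      · subst h
        simp [hfdef]
      · have hNpos : (0 : ℝ) < N := by exact_mod_cast h
        have hfN : f N = (((Finset.Icc 1 N).filter (fun x => x ∈ A)).card : ℝ) / N := rfl
        rw [hfN, div_le_one hNpos]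
        have : ((Finset.Icc 1 N).filter (fun x => x ∈ A)).card ≤ N := by
          calc _ ≤ (Finset.Icc 1 N).card := Finset.card_filter_le _ _
            _ = N := hcard N
        exact_mod_cast this
    have hcobdd : Filter.IsCoboundedUnder (· ≥ ·) atTop f :=
      Filter.IsBoundedUnder.isCoboundedUnder_ge ⟨1, Filter.eventually_map.mpr
        (Filter.Eventually.of_forall hub)⟩
    have hmain : 1 - c ≤ liminf f atTop :=
      Filter.le_liminf_of_le hcobdd (Filter.eventually_atTop.mpr ⟨1, key⟩)
    exact ⟨hmain, lt_of_lt_of_le (by linarith) hmain⟩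
end

section
/- Let G be a countably infinite semigroup acting minimally by continuous maps on a compact metric space X which is not finite, and let μ be a G-invariant Borel probability measure on X. Then for every c ∈ (0,1) there exists a nowhere dense Borel set E ⊆ X with μ(E) = c. -/
/-!
Invariance gives every point of an orbit at least the mass of its starting point, and orbits are
dense, hence infinite, so the finite measure `μ` has no atoms. A countable dense set is then
contained in an open dense set of measure `< 1 - c`, whose complement `K` is closed, nowhere dense
and of measure `> c`. Finally a Borel embedding of `X` into `ℝ` pushes `μ` restricted to `K`
forward to an atomless measure on `ℝ`; its distribution function is continuous and therefore
takes the value `c`, and the preimage of the corresponding half-line, intersected with `K`, is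
the required set.
-/

open MeasureTheory Set Filter Topology

namespace Set

variable {α : Type*} [LinearOrder α] [DenselyOrdered α]

theorem biInter_gt_Iic (b : α) : ⋂ r > b, Iic r = Iic b := by
  ext x
  simp only [mem_iInter, mem_Iic]
  exact ⟨fun h => le_of_forall_gt_imp_ge_of_dense h, fun h r hr => h.trans hr.le⟩

theorem biInter_lt_Ioi (b : α) : ⋂ r < b, Ioi r = Ici b := by
  ext x
  simp only [mem_iInter, mem_Ioi, mem_Ici]
  exact ⟨fun h => le_of_forall_lt_imp_le_of_dense fun r hr => (h r hr).le,
    fun h r hr => hr.trans_le h⟩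

end Set

theorem continuous_measure_Iic {α : Type*} [LinearOrder α] [DenselyOrdered α] [NoMinOrder α]
    [NoMaxOrder α] [TopologicalSpace α] [OrderTopology α] [FirstCountableTopology α]
    [MeasurableSpace α] [OpensMeasurableSpace α] (ν : Measure α) [IsFiniteMeasure ν]
    [NullSingletonClass ν] :
    Continuous fun t => ν (Iic t) := by
  refine continuous_iff_continuousAt.2 fun b =>
    continuousAt_iff_continuous_left'_right'.2 ⟨?_, ?_⟩
  · -- `Iic t = (Ioi t)ᶜ`, and `Ioi t` decreases to `Ici b` as `t` increases to `b`,
    -- which is a right limit in the order dual.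
    have h : Tendsto (fun t => ν (Ioi t)) (𝓝[<] b) (𝓝 (ν (Ici b))) := by
      obtain ⟨a, hab⟩ := exists_lt b
      rw [← biInter_lt_Ioi]
      exact tendsto_measure_biInter_gt (μ := ν) (ι := αᵒᵈ) (s := fun r => Ioi (OrderDual.ofDual r))
        (fun r _ => measurableSet_Ioi.nullMeasurableSet) (fun i j _ hij => Ioi_subset_Ioi hij)
        ⟨OrderDual.toDual a, OrderDual.toDual_lt_toDual.2 hab, measure_ne_top _ _⟩
    have hcompl (t : α) : ν (Iic t) = ν univ - ν (Ioi t) := by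
      rw [← compl_Ioi, measure_compl measurableSet_Ioi (measure_ne_top _ _)]
    simp only [ContinuousWithinAt, hcompl, ← measure_congr (Ioi_ae_eq_Ici (μ := ν))] at h ⊢
    exact ENNReal.Tendsto.sub tendsto_const_nhds h (Or.inl (measure_ne_top _ _))
  · obtain ⟨c, hbc⟩ := exists_gt b
    have h := tendsto_measure_biInter_gt (μ := ν) (s := Iic) (a := b)
      (fun r _ => measurableSet_Iic.nullMeasurableSet)
      (fun i j _ hij => Iic_subset_Iic.2 hij) ⟨c, hbc, measure_ne_top _ _⟩
    rwa [biInter_gt_Iic] at h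

theorem exists_measure_Iic_eq (ν : Measure ℝ) [IsFiniteMeasure ν] [NullSingletonClass ν]
    {r : ENNReal} (h0 : 0 < r) (hr : r < ν univ) : ∃ t, ν (Iic t) = r := by
  have hbot : Tendsto (fun t => ν (Iic t)) atBot (𝓝 0) := by
    have hempty : ⋂ t : ℝ, Iic t = ∅ := iInter_Iic_eq_empty_iff.2 (by simp)
    have := tendsto_measure_iInter_atBot (μ := ν)
      (fun t => measurableSet_Iic.nullMeasurableSet) monotone_Iic ⟨0, measure_ne_top _ _⟩
    rwa [hempty, measure_empty] at this
  obtain ⟨a, ha⟩ := (hbot.eventually (eventually_lt_nhds h0)).exists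
  obtain ⟨b, hb⟩ := ((tendsto_measure_Iic_atTop ν).eventually (eventually_gt_nhds hr)).exists
  exact intermediate_value_univ a b (continuous_measure_Iic ν) ⟨ha.le, hb.le⟩

theorem exists_measurableSet_subset_measure_eq {X : Type*} [MeasurableSpace X]
    [StandardBorelSpace X] (μ : Measure X) [IsFiniteMeasure μ] [NullSingletonClass μ]
    {K : Set X} (hK : MeasurableSet K) {r : ENNReal} (h0 : 0 < r) (hr : r < μ K) :
    ∃ E ⊆ K, MeasurableSet E ∧ μ E = r := by
  have hf := measurableEmbedding_embeddingReal X
  set ν := (μ.restrict K).map (embeddingReal X)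
  have : NullSingletonClass ν := ⟨fun y => by
    rw [hf.map_apply, Measure.restrict_apply' hK]
    exact ((subsingleton_singleton.preimage hf.injective).anti inter_subset_left).measure_zero _⟩
  obtain ⟨t, ht⟩ := exists_measure_Iic_eq ν h0
    (by rwa [hf.map_apply, preimage_univ, Measure.restrict_apply_univ])
  refine ⟨embeddingReal X ⁻¹' Iic t ∩ K, inter_subset_right,
    (hf.measurable measurableSet_Iic).inter hK, ?_⟩
  rwa [hf.map_apply, Measure.restrict_apply' hK] at ht

theorem exists_isOpen_dense_measure_lt {X : Type*} [TopologicalSpace X]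
    [TopologicalSpace.SeparableSpace X] [MeasurableSpace X] (μ : Measure X) [μ.OuterRegular]
    [NullSingletonClass μ] {ε : ENNReal} (hε : ε ≠ 0) :
    ∃ U, IsOpen U ∧ Dense U ∧ μ U < ε := by
  obtain ⟨D, hDc, hDd⟩ := TopologicalSpace.exists_countable_dense X
  obtain ⟨U, hDU, hUo, hU⟩ :=
    D.exists_isOpen_lt_of_lt ε (by rwa [hDc.measure_zero μ, pos_iff_ne_zero])
  exact ⟨U, hUo, hDd.mono hDU, hU⟩

theorem Dense.infinite {X : Type*} [TopologicalSpace X] [T1Space X] [Infinite X]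
    {s : Set X} (hs : Dense s) : s.Infinite := fun hfin =>
  infinite_univ (hs.closure_eq ▸ hfin.isClosed.closure_eq ▸ hfin)

theorem nullSingletonClass_of_dense_orbits {G X : Type*} [TopologicalSpace X] [T1Space X]
    [Infinite X] [MeasurableSpace X] [MeasurableSingletonClass X] [SMul G X]
    (hmin : ∀ x : X, Dense (range fun g : G => g • x)) (μ : Measure X) [IsFiniteMeasure μ]
    (hinv : ∀ (g : G) (B : Set X), MeasurableSet B → μ ((fun x => g • x) ⁻¹' B) = μ B) :
    NullSingletonClass μ := by
  refine ⟨fun x => by_contra fun hx => measure_ne_top μ (range fun g : G => g • x) ?_⟩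
  refine (hmin x).infinite.meas_eq_top ⟨μ {x}, hx, ?_⟩
  rintro _ ⟨g, rfl⟩
  calc μ {x} ≤ μ ((fun y => g • y) ⁻¹' {g • x}) :=
        measure_mono fun y (hy : y = x) => congrArg (g • ·) hy
    _ = μ {g • x} := hinv g _ (measurableSet_singleton _)

theorem exists_nowhereDense_of_measure_general {G X : Type*}
    [MetricSpace X] [CompactSpace X] [Infinite X]
    [MeasurableSpace X] [BorelSpace X]
    [SMul G X]
    (hmin : ∀ x : X, Dense (Set.range fun g : G => g • x))
    (μ : Measure X) [IsProbabilityMeasure μ]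
    (hinv : ∀ (g : G) (B : Set X), MeasurableSet B → μ ((fun x => g • x) ⁻¹' B) = μ B)
    (c : ℝ) (hc : c ∈ Set.Ioo (0 : ℝ) 1) :
    ∃ E : Set X, IsNowhereDense E ∧ MeasurableSet E ∧ μ E = ENNReal.ofReal c := by
  have := nullSingletonClass_of_dense_orbits hmin μ hinv
  obtain ⟨U, hUo, hUd, hU⟩ := exists_isOpen_dense_measure_lt μ
    (tsub_pos_of_lt (ENNReal.ofReal_lt_one.2 hc.2)).ne'
  have hK : IsClosed Uᶜ ∧ IsNowhereDense Uᶜ :=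
    isClosed_isNowhereDense_iff_compl.2 (by rw [compl_compl]; exact ⟨hUo, hUd⟩)
  obtain ⟨E, hEK, hEm, hE⟩ := exists_measurableSet_subset_measure_eq μ hK.1.measurableSet
    (ENNReal.ofReal_pos.2 hc.1) (by rwa [prob_compl_eq_one_sub hUo.measurableSet, lt_tsub_comm])
  exact ⟨E, hK.2.mono hEK, hEm, hE⟩

/-- Let a countably infinite semigroup `G` act minimally by continuous maps
on an infinite compact metric space `X`, and let `μ` be a `G`-invariant Borel
probability measure on `X`.  Then for every `c ∈ (0,1)` there is a nowhere
dense Borel set `E ⊆ X` with `μ(E) = c`. -/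
theorem exists_nowhereDense_of_measure {G X : Type*} [Semigroup G]
    [Countable G] [Infinite G]
    [MetricSpace X] [CompactSpace X] [Infinite X]
    [MeasurableSpace X] [BorelSpace X]
    [SMul G X] [IsScalarTower G G X] [ContinuousConstSMul G X]
    (hmin : ∀ x : X, Dense (Set.range fun g : G => g • x))
    (μ : Measure X) [IsProbabilityMeasure μ]
    (hinv : ∀ (g : G) (B : Set X), MeasurableSet B → μ ((fun x => g • x) ⁻¹' B) = μ B)
    (c : ℝ) (hc : c ∈ Set.Ioo (0 : ℝ) 1) :
    ∃ E : Set X, IsNowhereDense E ∧ MeasurableSet E ∧ μ E = ENNReal.ofReal c :=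
  exists_nowhereDense_of_measure_general hmin μ hinv c hc
end

section
/- Let G be a countably infinite semigroup and let A ⊆ G. Then A is not piecewise syndetic if and only if for every finite H ⊆ G there exists a syndetic set S ⊆ G such that HS ∩ A = ∅, where HS = {hs : h ∈ H, s ∈ S}. -/
/-- `A` is not piecewise syndetic iff for every finite `H ⊆ G` there is a
syndetic set `S` with `HS ∩ A = ∅`. -/
theorem not_piecewiseSyndetic_iff {G : Type*} [Semigroup G] [Countable G] [Infinite G]
    (A : Set G) :
    ¬ PiecewiseSyndetic A ↔
      ∀ H : Finset G, ∃ S : Set G, Syndetic S ∧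
        {x : G | ∃ h ∈ H, ∃ s ∈ S, x = h * s} ∩ A = ∅ := by
  constructor
  · intro hnps H
    have hnt : ¬ Thick {x : G | ∃ h ∈ H, h * x ∈ A} := fun ht => hnps ⟨H, ht⟩
    simp only [Thick, not_forall, not_exists] at hnt
    obtain ⟨F, hF⟩ := hnt
    refine ⟨{x : G | ∃ h ∈ H, h * x ∈ A}ᶜ, ⟨F, fun x => ?_⟩, ?_⟩
    · have := hF x
      obtain ⟨f, hfF, hf⟩ := this
      exact ⟨f, hfF, hf⟩
    · ext x
      simp only [Set.mem_inter_iff, Set.mem_empty_iff_false, iff_false, not_and]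
      rintro ⟨h, hhH, s, hs, rfl⟩ hA
      exact hs ⟨h, hhH, hA⟩
  · rintro h ⟨H, hT⟩
    obtain ⟨S, ⟨K, hK⟩, hdisj⟩ := h H
    obtain ⟨g, hg⟩ := hT K
    obtain ⟨k, hkK, hkS⟩ := hK g
    obtain ⟨h', hh', hA⟩ := hg k hkK
    have : h' * (k * g) ∈ {x : G | ∃ h ∈ H, ∃ s ∈ S, x = h * s} ∩ A :=
      ⟨⟨h', hh', k * g, hkS, rfl⟩, hA⟩
    rw [hdisj] at this
    exact this
end

section
/- Let G be a countably infinite group and let (N_n)_{n∈ℕ} be a sequence of normal subgroups of G of finite index such that the indices [G : N_n] are pairwise coprime. Then for any sequence (g_n)_{n∈ℕ} in G, the set A = G \ ⋃_{n∈ℕ} g_nN_n is not piecewise syndetic. -/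
namespace Subgroup

variable {G : Type*} [Group G]

lemma sup_eq_top_of_coprime_index {A B : Subgroup G} (h : Nat.Coprime A.index B.index) :
    A ⊔ B = ⊤ :=
  index_eq_one.mp <| Nat.eq_one_of_dvd_coprimes h (index_dvd_of_le le_sup_left)
    (index_dvd_of_le le_sup_right)

lemma index_inf_dvd_of_normal (A B : Subgroup G) [A.Normal] :
    (A ⊓ B).index ∣ A.index * B.index := by
  rw [← relIndex_mul_index (inf_le_right : A ⊓ B ≤ B), inf_relIndex_right]
  exact mul_dvd_mul_right (relIndex_dvd_index_of_normal A B) _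

lemma index_finsetInf_dvd_prod {ι : Type*} [DecidableEq ι] (N : ι → Subgroup G) (s : Finset ι)
    (hN : ∀ i ∈ s, (N i).Normal) : (s.inf N).index ∣ ∏ i ∈ s, (N i).index := by
  induction s using Finset.induction_on with
  | empty => simp
  | @insert i s hi ih =>
    have := hN i (Finset.mem_insert_self i s)
    rw [Finset.inf_insert, Finset.prod_insert hi]
    exact (index_inf_dvd_of_normal _ _).trans
      (mul_dvd_mul_left _ (ih fun j hj => hN j (Finset.mem_insert_of_mem hj)))

lemma exists_mk_eq_mk_of_sup_eq_top {A B : Subgroup G} [A.Normal] (h : A ⊔ B = ⊤) (a b : G) :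
    ∃ x : G, (x : G ⧸ A) = a ∧ (x : G ⧸ B) = b := by
  have hab : a⁻¹ * b ∈ ((A ⊔ B : Subgroup G) : Set G) := by simp [h]
  rw [normal_mul] at hab
  obtain ⟨u, hu, v, hv, huv⟩ := hab
  refine ⟨a * u, QuotientGroup.eq.mpr (by simpa using A.inv_mem hu), QuotientGroup.eq.mpr ?_⟩
  rw [show (a * u)⁻¹ * b = v by rw [mul_inv_rev, mul_assoc, ← huv]; group]
  exact hv

lemma exists_forall_mk_eq_of_coprime_index {ι : Type*} [DecidableEq ι] (N : ι → Subgroup G)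
    (s : Finset ι) (hN : ∀ i ∈ s, (N i).Normal)
    (hcop : ∀ i ∈ s, ∀ j ∈ s, i ≠ j → Nat.Coprime (N i).index (N j).index) (c : ι → G) :
    ∃ x : G, ∀ i ∈ s, (x : G ⧸ N i) = c i := by
  induction s using Finset.induction_on with
  | empty => exact ⟨1, by simp⟩
  | @insert i s hi ih =>
    obtain ⟨y, hy⟩ := ih (fun j hj => hN j (Finset.mem_insert_of_mem hj))
      (fun j hj k hk => hcop j (Finset.mem_insert_of_mem hj) k (Finset.mem_insert_of_mem hk))
    have := hN i (Finset.mem_insert_self i s)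
    have hcop_prod : Nat.Coprime (N i).index (∏ j ∈ s, (N j).index) :=
      Nat.Coprime.prod_right fun j hj => hcop i (Finset.mem_insert_self i s) j
        (Finset.mem_insert_of_mem hj) (ne_of_mem_of_not_mem hj hi).symm
    have hcop_inf : Nat.Coprime (N i).index (s.inf N).index := hcop_prod.coprime_dvd_right
      (index_finsetInf_dvd_prod N s fun j hj => hN j (Finset.mem_insert_of_mem hj))
    obtain ⟨x, hxi, hxs⟩ :=
      exists_mk_eq_mk_of_sup_eq_top (sup_eq_top_of_coprime_index hcop_inf) (c i) y
    refine ⟨x, Finset.forall_mem_insert _ _ _ |>.mpr ⟨hxi, fun j hj => ?_⟩⟩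
    rw [← hy j hj, eq_comm, QuotientGroup.eq]
    exact Finset.inf_le (f := N) hj (QuotientGroup.eq.mp hxs.symm)

end Subgroup

lemma Thick.exists_forall_exists_mul_mem {G : Type*} [Group G] {T : Set G} (hT : Thick T)
    (K : Subgroup G) [K.FiniteIndex] : ∃ t : G, ∀ x : G, ∃ k ∈ K, x * k * t ∈ T := by
  classical
  obtain ⟨t, ht⟩ := hT (Set.finite_range fun q : G ⧸ K => q.out).toFinset
  refine ⟨t, fun x => ?_⟩
  obtain ⟨k, hk⟩ := QuotientGroup.mk_out_eq_mul K x
  exact ⟨k, k.2, hk ▸ ht _ (by simp)⟩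

theorem complement_of_cosets_not_piecewiseSyndetic_general {G : Type*} [Group G]
    [Countable G]
    (N : ℕ → Subgroup G) (hnorm : ∀ n, (N n).Normal)
    (hfin : ∀ n, (N n).index ≠ 0)
    (hcop : ∀ m n, m ≠ n → Nat.Coprime ((N m).index) ((N n).index))
    (g : ℕ → G) :
    ¬ PiecewiseSyndetic
      (Set.univ \ ⋃ n, {x : G | ∃ y ∈ N n, x = g n * y}) := by
  classical
  rintro ⟨H, hT⟩
  obtain ⟨e, he⟩ := exists_injective_nat G
  set K := H.inf fun h => N (e h)
  have hKnorm : ∀ h ∈ H, (N (e h)).Normal := fun h _ => hnorm (e h)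
  have : K.FiniteIndex := ⟨ne_zero_of_dvd_ne_zero
    (Finset.prod_ne_zero_iff.mpr fun h _ => hfin (e h))
    (Subgroup.index_finsetInf_dvd_prod _ H hKnorm)⟩
  obtain ⟨t, ht⟩ := hT.exists_forall_exists_mul_mem K
  obtain ⟨x, hx⟩ := Subgroup.exists_forall_mk_eq_of_coprime_index _ H hKnorm
    (fun i _ j _ hij => hcop _ _ (he.ne hij)) fun h => h⁻¹ * g (e h) * t⁻¹
  obtain ⟨k, hk, h, hH, hA⟩ := ht x
  refine hA.2 <| Set.mem_iUnion.mpr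
    ⟨e h, _, QuotientGroup.eq.mp ?_, (mul_inv_cancel_left _ _).symm⟩
  have := hnorm (e h)
  have hk1 : (k : G ⧸ N (e h)) = 1 :=
    (QuotientGroup.eq_one_iff k).mpr (Finset.inf_le (f := fun h => N (e h)) hH hk)
  simp [QuotientGroup.mk_mul, hx h hH, hk1, mul_assoc]

/-- Let `G` be a countably infinite group and `(N n)` a sequence of normal
finite-index subgroups whose indices are pairwise coprime.  Then for any
sequence `(g n)` in `G`, the set `G \ ⋃ₙ gₙNₙ` is not piecewise syndetic. -/
theorem complement_of_cosets_not_piecewiseSyndetic {G : Type*} [Group G]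
    [Countable G] [Infinite G]
    (N : ℕ → Subgroup G) (hnorm : ∀ n, (N n).Normal)
    (hfin : ∀ n, (N n).index ≠ 0)
    (hcop : ∀ m n, m ≠ n → Nat.Coprime ((N m).index) ((N n).index))
    (g : ℕ → G) :
    ¬ PiecewiseSyndetic
      (Set.univ \ ⋃ n, {x : G | ∃ y ∈ N n, x = g n * y}) :=
  complement_of_cosets_not_piecewiseSyndetic_general N hnorm hfin hcop g
end

section
/- Let (b_n)_{n∈ℕ} be a sequence of pairwise coprime positive integers with Σ_{n∈ℕ} 1/b_n < ∞, and let 𝔉 = ℤ \ ⋃_{n∈ℕ} b_nℤ be the set of integers divisible by no b_n. Then the density of 𝔉 with respect to the Følner sequence Φ_N = {−N, …, N} in (ℤ, +) exists and equals ∏_{n∈ℕ} (1 − 1/b_n); that is, lim_{N→∞} |𝔉 ∩ {−N, …, N}|/(2N+1) = ∏_{n∈ℕ} (1 − 1/b_n). -/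
/-!
Sieving out only `b₀, …, b_{M-1}` leaves a set that is periodic modulo `b₀ ⋯ b_{M-1}`; by the
Chinese remainder theorem exactly `∏_{n<M} (bₙ - 1)` residues survive, so this set has density
`∏_{n<M} (1 - 1/bₙ)`. The integers of `[-N, N]` removed by the remaining moduli are nonzero
multiples of some `bₙ` with `n ≥ M`, so there are at most `2N ∑_{n≥M} 1/bₙ` of them. Hence the
truncated densities converge to the true one uniformly in `N`, and the two limits can be
exchanged (Moore–Osgood).
-/

open Finset Filter Topology Function

noncomputable def intervalDensity (p : ℤ → Prop) [DecidablePred p] (N : ℕ) : ℝ :=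
  #{k ∈ Icc (-(N : ℤ)) N | p k} / (2 * N + 1)

lemma intervalDensity_congr {p q : ℤ → Prop} [DecidablePred p] [DecidablePred q]
    (h : ∀ k, p k ↔ q k) : intervalDensity p = intervalDensity q := by
  ext N
  simp only [intervalDensity, h]

lemma abs_card_filter_Ico_modEq_sub_le {a b : ℤ} (hab : a ≤ b) {P : ℕ} (hP : 0 < P) (v : ℤ) :
    |(#{k ∈ Ico a b | k ≡ v [ZMOD P]} : ℝ) - (b - a) / P| ≤ 1 := by
  have hcard := Int.Ico_filter_modEq_card a b (r := P) (by exact_mod_cast hP) v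
  push_cast at hcard
  set x := (b - v) / (P : ℚ)
  set y := (a - v) / (P : ℚ)
  have hyx : y ≤ x := by simp only [x, y]; gcongr
  have hx := Int.ceil_lt_add_one x
  have hx' := Int.le_ceil x
  have hy := Int.ceil_lt_add_one y
  have hy' := Int.le_ceil y
  have hnonneg : 0 ≤ ⌈x⌉ - ⌈y⌉ := by
    have : ((⌈y⌉ : ℤ) : ℚ) < ⌈x⌉ + 1 := by linarith
    have : ⌈y⌉ < ⌈x⌉ + 1 := by exact_mod_cast this
    omega
  rw [max_eq_left hnonneg] at hcard
  have hxy : x - y = (b - a) / P := by simp only [x, y]; ring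
  have hQ : |((#{k ∈ Ico a b | k ≡ v [ZMOD P]} : ℤ) : ℚ) - (b - a) / P| ≤ 1 := by
    rw [hcard, abs_le]; push_cast; constructor <;> linarith
  exact_mod_cast hQ

lemma tendsto_intervalDensity_intCast_eq (P : ℕ) [NeZero P] (r : ZMod P) :
    Tendsto (intervalDensity fun k => (k : ZMod P) = r) atTop (𝓝 (1 / P)) := by
  have hbound (N : ℕ) :
      |intervalDensity (fun k => (k : ZMod P) = r) N - 1 / P| ≤ 1 / (N + 1) := by
    have hfilter : {k ∈ Icc (-(N : ℤ)) (N : ℤ) | ((k : ℤ) : ZMod P) = r}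
        = {k ∈ Ico (-(N : ℤ)) (N + 1) | k ≡ r.cast [ZMOD P]} := by
      ext k
      rw [mem_filter, mem_filter, mem_Icc, mem_Ico, ← ZMod.intCast_eq_intCast_iff,
        ZMod.intCast_zmod_cast]
      constructor <;> rintro ⟨h1, h2⟩ <;> exact ⟨by omega, h2⟩
    have h := abs_card_filter_Ico_modEq_sub_le (a := -N) (b := N + 1) (by omega)
      (NeZero.pos P) r.cast
    rw [← hfilter] at h
    push_cast at h
    have hN : (0 : ℝ) < 2 * N + 1 := by positivity
    calc |intervalDensity (fun k => (k : ZMod P) = r) N - 1 / P|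
      _ = |(#{k ∈ Icc (-(N : ℤ)) (N : ℤ) | ((k : ℤ) : ZMod P) = r} : ℝ) - (N + 1 - -N) / P|
            / (2 * N + 1) := by
          rw [intervalDensity, ← abs_of_pos hN, ← abs_div, abs_of_pos hN]
          congr 1; field_simp; ring
      _ ≤ 1 / (2 * N + 1) := by gcongr
      _ ≤ 1 / (N + 1) := by gcongr; linarith [(N.cast_nonneg : (0 : ℝ) ≤ N)]
  exact tendsto_iff_norm_sub_tendsto_zero.2 <| squeeze_zero (fun _ => norm_nonneg _) hbound
    tendsto_one_div_add_atTop_nhds_zero_nat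

lemma tendsto_intervalDensity_intCast_mem (P : ℕ) [NeZero P] (S : Finset (ZMod P)) :
    Tendsto (intervalDensity fun k => (k : ZMod P) ∈ S) atTop (𝓝 (#S / P)) := by
  classical
  have hsum : intervalDensity (fun k => (k : ZMod P) ∈ S)
      = fun N => ∑ r ∈ S, intervalDensity (fun k => (k : ZMod P) = r) N := by
    ext N
    simp only [intervalDensity, ← sum_div, ← Nat.cast_sum, sum_card_fiberwise_eq_card_filter]
  rw [hsum]
  convert tendsto_finsetSum S fun r _ => tendsto_intervalDensity_intCast_eq P r using 2
  simp [div_eq_mul_inv]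

theorem tendsto_intervalDensity_forall_not_dvd {ι : Type*} [Fintype ι] (a : ι → ℕ)
    [∀ i, NeZero (a i)] (ha : Pairwise (Nat.Coprime on a)) :
    Tendsto (intervalDensity fun k => ∀ i, ¬ (a i : ℤ) ∣ k) atTop
      (𝓝 (∏ i, (1 - 1 / (a i : ℝ)))) := by
  classical
  have : NeZero (∏ i, a i) := ⟨prod_ne_zero_iff.2 fun i _ => NeZero.ne _⟩
  let e := ZMod.prodEquivPi a ha
  let S := (Fintype.piFinset fun i => univ.erase (0 : ZMod (a i))).map e.symm.toEquiv.toEmbedding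
  have hmem (k : ℤ) : (k : ZMod (∏ i, a i)) ∈ S ↔ ∀ i, ¬ (a i : ℤ) ∣ k := by
    simp [S, e, ← ZMod.intCast_zmod_eq_zero_iff_dvd]
  have hcard : #S = ∏ i, (a i - 1) := by
    simp [S, card_erase_of_mem]
  have hlim : (#S : ℝ) / (∏ i, a i : ℕ) = ∏ i, (1 - 1 / (a i : ℝ)) := by
    rw [hcard, Nat.cast_prod, Nat.cast_prod, ← prod_div_distrib]
    refine prod_congr rfl fun i _ => ?_
    rw [Nat.cast_sub NeZero.one_le, sub_div, div_self (NeZero.ne _)]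
    simp
  rw [← intervalDensity_congr hmem, ← hlim]
  exact tendsto_intervalDensity_intCast_mem (∏ i, a i) S

lemma card_filter_Icc_dvd_ne_zero_le (d N : ℕ) :
    #{k ∈ Icc (-(N : ℤ)) (N : ℤ) | (d : ℤ) ∣ k ∧ k ≠ 0} ≤ 2 * (N / d) := by
  generalize hq : N / d = q
  have hsub : {k ∈ Icc (-(N : ℤ)) (N : ℤ) | (d : ℤ) ∣ k ∧ k ≠ 0}
      ⊆ ((Icc (-(q : ℤ)) q).erase 0).image (· * (d : ℤ)) := by
    intro k hk
    obtain ⟨hkN, ⟨j, rfl⟩, hj0⟩ := mem_filter.1 hk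
    have hd : 0 < d := by rcases Nat.eq_zero_or_pos d with h | h <;> simp_all
    have hjq : j.natAbs ≤ q := by
      rw [← hq, Nat.le_div_iff_mul_le hd, mul_comm, ← Int.natAbs_natCast d, ← Int.natAbs_mul]
      have := mem_Icc.1 hkN
      omega
    exact mem_image.2 ⟨j, mem_erase.2 ⟨by rintro rfl; simp at hj0, mem_Icc.2 ⟨by omega, by omega⟩⟩,
      mul_comm _ _⟩
  calc #{k ∈ Icc (-(N : ℤ)) (N : ℤ) | (d : ℤ) ∣ k ∧ k ≠ 0}
      _ ≤ #((Icc (-(q : ℤ)) q).erase 0) := (card_le_card hsub).trans card_image_le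
      _ = 2 * q := by rw [card_erase_of_mem (mem_Icc.2 ⟨by omega, by omega⟩), Int.card_Icc]; omega

lemma sum_le_tsum_sub_sum_range {α : Type*} [AddCommGroup α] [PartialOrder α] [IsOrderedAddMonoid α]
    [TopologicalSpace α] [OrderClosedTopology α] {f : ℕ → α} (hf : Summable f) (hf0 : ∀ n, 0 ≤ f n)
    {M : ℕ} {T : Finset ℕ} (hT : ∀ n ∈ T, M ≤ n) :
    ∑ n ∈ T, f n ≤ ∑' n, f n - ∑ n ∈ range M, f n := by
  have hdisj : Disjoint T (range M) :=
    disjoint_left.2 fun n hn hn' => (mem_range.1 hn').not_ge (hT n hn)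
  rw [le_sub_iff_add_le, ← sum_union hdisj]
  exact hf.sum_le_tsum _ fun n _ => hf0 n

open Classical in
lemma card_filter_forall_lt_not_dvd_sub_card_le (b : ℕ → ℕ)
    (hsum : Summable fun n => (1 : ℝ) / b n) {M : ℕ} (hM : 0 < M) (N : ℕ) :
    (#{k ∈ Icc (-(N : ℤ)) (N : ℤ) | ∀ n < M, ¬ (b n : ℤ) ∣ k} : ℝ)
        - #{k ∈ Icc (-(N : ℤ)) (N : ℤ) | ∀ n, ¬ (b n : ℤ) ∣ k}
      ≤ 2 * N * (∑' n, (1 : ℝ) / b n - ∑ n ∈ range M, (1 : ℝ) / b n) := by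
  set FM := {k ∈ Icc (-(N : ℤ)) (N : ℤ) | ∀ n < M, ¬ (b n : ℤ) ∣ k}
  set F := {k ∈ Icc (-(N : ℤ)) (N : ℤ) | ∀ n, ¬ (b n : ℤ) ∣ k}
  have hsub : F ⊆ FM := monotone_filter_right _ fun k _ hk n _ => hk n
  let w : ℤ → ℕ := fun k => if h : ∃ n, (b n : ℤ) ∣ k then Nat.find h else 0
  have hw : ∀ k ∈ FM \ F,
      M ≤ w k ∧ k ∈ {j ∈ Icc (-(N : ℤ)) (N : ℤ) | (b (w k) : ℤ) ∣ j ∧ j ≠ 0} := by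
    intro k hk
    obtain ⟨hkM, hkF⟩ := mem_sdiff.1 hk
    obtain ⟨hkN, hkM⟩ := mem_filter.1 hkM
    have hex : ∃ n, (b n : ℤ) ∣ k := by
      by_contra! h
      exact hkF (mem_filter.2 ⟨hkN, h⟩)
    have hwk : (b (w k) : ℤ) ∣ k := by simpa [w, hex] using Nat.find_spec hex
    refine ⟨not_lt.1 fun h => hkM _ h hwk, mem_filter.2 ⟨hkN, hwk, ?_⟩⟩
    rintro rfl
    exact hkM 0 hM (dvd_zero _)
  have hcover : FM \ F ⊆ ((FM \ F).image w).biUnion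
      fun n => {k ∈ Icc (-(N : ℤ)) (N : ℤ) | (b n : ℤ) ∣ k ∧ k ≠ 0} :=
    fun k hk => mem_biUnion.2 ⟨w k, mem_image_of_mem w hk, (hw k hk).2⟩
  calc (#FM : ℝ) - #F = #(FM \ F) := by
        rw [card_sdiff_of_subset hsub, Nat.cast_sub (card_le_card hsub)]
    _ ≤ ∑ n ∈ (FM \ F).image w, (#{k ∈ Icc (-(N : ℤ)) (N : ℤ) | (b n : ℤ) ∣ k ∧ k ≠ 0} : ℝ) := by
        exact_mod_cast (card_le_card hcover).trans card_biUnion_le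
    _ ≤ ∑ n ∈ (FM \ F).image w, 2 * N * ((1 : ℝ) / b n) := by
        refine sum_le_sum fun n _ => ?_
        calc (#{k ∈ Icc (-(N : ℤ)) (N : ℤ) | (b n : ℤ) ∣ k ∧ k ≠ 0} : ℝ)
            _ ≤ ((2 * (N / b n) : ℕ) : ℝ) := by exact_mod_cast card_filter_Icc_dvd_ne_zero_le _ _
            _ ≤ 2 * N * ((1 : ℝ) / b n) := by
              push_cast; rw [mul_one_div, mul_div_assoc]; gcongr; exact Nat.cast_div_le
    _ ≤ 2 * N * (∑' n, (1 : ℝ) / b n - ∑ n ∈ range M, (1 : ℝ) / b n) := by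
        rw [← mul_sum]
        gcongr
        refine sum_le_tsum_sub_sum_range hsum (fun n => by positivity) fun n hn => ?_
        obtain ⟨k, hk, rfl⟩ := mem_image.1 hn
        exact (hw k hk).1

open Classical in
theorem tendstoUniformly_intervalDensity_forall_lt_not_dvd (b : ℕ → ℕ)
    (hsum : Summable fun n => (1 : ℝ) / b n) :
    TendstoUniformly (fun M => intervalDensity fun k => ∀ n < M, ¬ (b n : ℤ) ∣ k)
      (intervalDensity fun k => ∀ n, ¬ (b n : ℤ) ∣ k) atTop := by
  have htail : Tendsto (fun M => ∑' n, (1 : ℝ) / b n - ∑ n ∈ range M, (1 : ℝ) / b n) atTop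
      (𝓝 0) := by
    simpa using (tendsto_const_nhds (x := ∑' n, (1 : ℝ) / b n)).sub hsum.hasSum.tendsto_sum_nat
  rw [Metric.tendstoUniformly_iff]
  intro ε hε
  filter_upwards [eventually_gt_atTop 0, htail.eventually (gt_mem_nhds hε)] with M hM htM N
  have hsub : #{k ∈ Icc (-(N : ℤ)) (N : ℤ) | ∀ n, ¬ (b n : ℤ) ∣ k}
      ≤ #{k ∈ Icc (-(N : ℤ)) (N : ℤ) | ∀ n < M, ¬ (b n : ℤ) ∣ k} :=
    card_le_card <| monotone_filter_right _ fun k _ hk n _ => hk n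
  have hN : (0 : ℝ) < 2 * N + 1 := by positivity
  rw [intervalDensity, intervalDensity, Real.dist_eq, ← sub_div, abs_div, abs_of_pos hN,
    abs_sub_comm, abs_of_nonneg (sub_nonneg.2 (by exact_mod_cast hsub)), div_lt_iff₀ hN]
  have ht0 : 0 ≤ ∑' n, (1 : ℝ) / b n - ∑ n ∈ range M, (1 : ℝ) / b n :=
    sub_nonneg.2 (hsum.sum_le_tsum _ fun n _ => by positivity)
  calc _ ≤ 2 * N * (∑' n, (1 : ℝ) / b n - ∑ n ∈ range M, (1 : ℝ) / b n) :=
        card_filter_forall_lt_not_dvd_sub_card_le b hsum hM N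
    _ < ε * (2 * N + 1) := by nlinarith

open Classical in
/-- If `(b n)` is a sequence of pairwise coprime positive integers with
`Σ 1/bₙ < ∞`, then the set of `𝔅`-free integers `𝔉 = ℤ \ ⋃ₙ bₙℤ` has density
`∏ₙ (1 − 1/bₙ)` along the intervals `{−N, …, N}`. -/
theorem bfree_density (b : ℕ → ℕ) (hpos : ∀ n, 0 < b n)
    (hcop : ∀ m n, m ≠ n → Nat.Coprime (b m) (b n))
    (hsum : Summable (fun n => (1 : ℝ) / b n)) :
    Tendsto
      (fun N : ℕ =>
        (((Finset.Icc (-(N : ℤ)) (N : ℤ)).filter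
          (fun k : ℤ => ∀ n : ℕ, ¬ ((b n : ℤ) ∣ k))).card : ℝ) / (2 * N + 1))
      atTop (nhds (∏' n : ℕ, (1 - 1 / (b n : ℝ)))) := by
  have (n : ℕ) : NeZero (b n) := ⟨(hpos n).ne'⟩
  have htrunc (M : ℕ) : Tendsto (intervalDensity fun k => ∀ n < M, ¬ (b n : ℤ) ∣ k) atTop
      (𝓝 (∏ n ∈ range M, (1 - 1 / (b n : ℝ)))) := by
    rw [← Fin.prod_univ_eq_prod_range (fun n => 1 - 1 / (b n : ℝ))]
    convert tendsto_intervalDensity_forall_not_dvd (fun n : Fin M => b n)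
      fun i j hij => hcop i j (Fin.val_injective.ne hij) using 1
    ext N
    simp only [intervalDensity, Fin.forall_iff]
  have hprod : Tendsto (fun M => ∏ n ∈ range M, (1 - 1 / (b n : ℝ))) atTop
      (𝓝 (∏' n, (1 - 1 / (b n : ℝ)))) := by
    have hmul : Multipliable fun n => 1 - 1 / (b n : ℝ) := by
      simpa [sub_eq_add_neg] using Real.multipliable_one_add_of_summable hsum.neg
    exact hmul.hasProd.tendsto_prod_nat
  exact (tendstoUniformly_intervalDensity_forall_lt_not_dvd b hsum).tendsto_of_eventually_tendsto
    (Eventually.of_forall htrunc) hprod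
end

section
/- Let d ≥ 2 and for each i ∈ {1, …, d} let (b_{n,i})_{n∈ℕ} be a sequence of pairwise coprime positive integers. Then the density of the set ℤ^d \ ⋃_{n∈ℕ} (b_{n,1}ℤ × ⋯ × b_{n,d}ℤ) with respect to the Følner sequence of boxes Φ_N = {−N, …, N}^d in (ℤ^d, +) exists and equals ∏_{n∈ℕ} (1 − 1/(b_{n,1} b_{n,2} ⋯ b_{n,d})). -/
/-!
Write `Bₙ = ∏ i, b n i`. For fixed `i` the `b n i` are pairwise coprime, so `x` lies in the
lattices `∏ i, (b n i)ℤ` for all `n ∈ T` iff each `x i` is divisible by `∏ n ∈ T, b n i`; by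
inclusion–exclusion the points of the cube `{-N, …, N}^d` avoiding the first `M` lattices thus
have density tending to `∏ n < M, (1 - 1/Bₙ)`, an upper bound for the density of the free points.
If `∑ 1/Bₙ = ∞` these products tend to `0`. Otherwise a point avoiding the first `M` lattices but
not all of them either has a zero coordinate (a proportion `1 - (2N/(2N+1))^d → 0` of the cube) or
lies in a lattice with index `n ≥ M`. Off the coordinate hyperplanes that lattice meets the cube in
at most `(2N)^d / Bₙ` points, with no `+1` per coordinate that would be summed over infinitely
many `n`, and `∑ n ≥ M, 1/Bₙ → 0`.
-/

open Filter Topology Finset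

theorem Real.multipliable_of_nonneg_of_le_one {ι : Type*} {f : ι → ℝ} (h₀ : ∀ i, 0 ≤ f i)
    (h₁ : ∀ i, f i ≤ 1) : Multipliable f :=
  ⟨_, tendsto_atTop_ciInf
    (fun _ _ hst => prod_le_prod_of_subset_of_le_one hst (fun i _ => h₀ i) fun i _ _ => h₁ i)
    ⟨0, by rintro _ ⟨s, rfl⟩; exact prod_nonneg fun i _ => h₀ i⟩⟩

theorem tendsto_prod_range_one_sub_of_not_summable {a : ℕ → ℝ} (h₀ : ∀ n, 0 ≤ a n)
    (h₁ : ∀ n, a n ≤ 1) (ha : ¬Summable a) :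
    Tendsto (fun M => ∏ n ∈ range M, (1 - a n)) atTop (𝓝 0) := by
  have hexp : Tendsto (fun M => Real.exp (-∑ n ∈ range M, a n)) atTop (𝓝 0) :=
    Real.tendsto_exp_neg_atTop_nhds_zero.comp
      ((not_summable_iff_tendsto_nat_atTop_of_nonneg h₀).1 ha)
  refine squeeze_zero (fun M => prod_nonneg fun n _ => sub_nonneg.2 (h₁ n)) (fun M => ?_) hexp
  calc ∏ n ∈ range M, (1 - a n)
      ≤ ∏ n ∈ range M, Real.exp (-a n) :=
        prod_le_prod (fun n _ => sub_nonneg.2 (h₁ n))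
          fun n _ => by linarith [Real.add_one_le_exp (-a n)]
    _ = Real.exp (-∑ n ∈ range M, a n) := by
        rw [← sum_neg_distrib, Real.exp_sum]

theorem Finset.card_le_tsum_card {α ι : Type*} (S : Finset α) (A : ι → Finset α)
    (hS : ∀ x ∈ S, ∃ i, x ∈ A i) (hA : Summable fun i => (#(A i) : ℝ)) :
    (#S : ℝ) ≤ ∑' i, (#(A i) : ℝ) := by
  classical
  choose w hw using hS
  let W := S.attach.image fun x => w x.1 x.2
  calc (#S : ℝ) ≤ #(W.biUnion A) := by
        refine mod_cast card_le_card fun x hx => mem_biUnion.2 ⟨w x hx, ?_, hw x hx⟩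
        exact mem_image_of_mem _ (mem_attach S ⟨x, hx⟩)
    _ ≤ ∑ i ∈ W, (#(A i) : ℝ) := mod_cast card_biUnion_le
    _ ≤ ∑' i, (#(A i) : ℝ) := hA.sum_le_tsum _ fun i _ => Nat.cast_nonneg _

theorem Finset.natCast_card_filter_forall_not {α ι R : Type*} [CommRing R] (X : Finset α)
    (s : Finset ι) (A : ι → α → Prop) [∀ i, DecidablePred (A i)] :
    (#{x ∈ X | ∀ i ∈ s, ¬A i x} : R) =
      ∑ t ∈ s.powerset, ((-1) ^ #t * #{x ∈ X | ∀ i ∈ t, A i x} : R) := by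
  simp only [natCast_card_filter, mul_sum]
  rw [sum_comm]
  refine sum_congr rfl fun x _ => ?_
  have hind : (if ∀ i ∈ s, ¬A i x then 1 else 0 : R) =
      ∏ i ∈ s, (1 + -if A i x then 1 else 0) := by
    rw [← prod_boole]
    refine prod_congr rfl fun i _ => ?_
    split_ifs <;> simp_all
  rw [hind, prod_one_add]
  exact sum_congr rfl fun t _ => by rw [prod_neg, prod_boole]

/-- Stated over `Fin d` rather than a general fintype: the instance deciding `∀ i : Fin d, _` is
not reducibly the generic one, so a general version would not rewrite. -/
theorem Fin.card_filter_piFinset_forall {d : ℕ} {α : Fin d → Type*} (s : ∀ i, Finset (α i))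
    (p : ∀ i, α i → Prop) [∀ i, DecidablePred (p i)] :
    #{x ∈ Fintype.piFinset s | ∀ i, p i (x i)} = ∏ i, #{y ∈ s i | p i y} := by
  rw [← Fintype.card_piFinset]
  congr 1
  ext x
  simp [forall_and]

section Approximation

variable {u P e δ : ℕ → ℝ} {g : ℕ → ℕ → ℝ} {L : ℝ}

theorem eventually_lt_of_le_approx (hg : ∀ M, Tendsto (g M) atTop (𝓝 (P M)))
    (hP : Tendsto P atTop (𝓝 L)) (hle : ∀ M N, u N ≤ g M N) {a : ℝ} (ha : L < a) :
    ∀ᶠ N in atTop, u N < a := by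
  obtain ⟨M, hM⟩ := ((tendsto_order.1 hP).2 a ha).exists
  filter_upwards [(tendsto_order.1 (hg M)).2 a hM] with N hN using (hle M N).trans_lt hN

theorem tendsto_of_approx_from_above (hg : ∀ M, Tendsto (g M) atTop (𝓝 (P M)))
    (hP : Tendsto P atTop (𝓝 L)) (he : Tendsto e atTop (𝓝 0)) (hδ : Tendsto δ atTop (𝓝 0))
    (hle : ∀ M N, u N ≤ g M N) (hsub : ∀ M N, g M N - u N ≤ e M + δ N) :
    Tendsto u atTop (𝓝 L) := by
  refine tendsto_order.2 ⟨fun a ha => ?_, fun a ha => eventually_lt_of_le_approx hg hP hle ha⟩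
  have hPe : Tendsto (fun M => P M - e M) atTop (𝓝 L) := by simpa using hP.sub he
  obtain ⟨M, hM⟩ := ((tendsto_order.1 hPe).1 a ha).exists
  have hgM : Tendsto (fun N => g M N - e M - δ N) atTop (𝓝 (P M - e M)) := by
    simpa using ((hg M).sub_const (e M)).sub hδ
  filter_upwards [(tendsto_order.1 hgM).1 a hM] with N hN
  linarith [hsub M N]

end Approximation

namespace Int

theorem card_filter_dvd_Icc_neg (m N : ℕ) (hm : 0 < m) :
    #{x ∈ Icc (-(N : ℤ)) N | (m : ℤ) ∣ x} = 2 * (N / m) + 1 := by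
  have hm' : (0 : ℤ) < m := by exact_mod_cast hm
  have hmul : ∀ k : ℤ, k * m ≤ N ↔ k ≤ ((N / m : ℕ) : ℤ) := fun k => by
    rw [Int.natCast_div, Int.le_ediv_iff_mul_le hm']
  have himage : (Icc (-((N / m : ℕ) : ℤ)) (N / m : ℕ)).image (· * (m : ℤ)) =
      {x ∈ Icc (-(N : ℤ)) N | (m : ℤ) ∣ x} := by
    ext x
    simp only [mem_image, mem_filter, mem_Icc]
    constructor
    · rintro ⟨k, ⟨hk₁, hk₂⟩, rfl⟩
      have h₁ := (hmul k).2 hk₂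
      have h₂ := (hmul (-k)).2 (by omega)
      exact ⟨⟨by linarith [neg_mul k (m : ℤ)], h₁⟩, dvd_mul_left _ _⟩
    · rintro ⟨⟨h₁, h₂⟩, k, rfl⟩
      refine ⟨k, ⟨?_, (hmul k).1 (by linarith [mul_comm (m : ℤ) k])⟩, mul_comm _ _⟩
      have := (hmul (-k)).1 (by linarith [neg_mul k (m : ℤ), mul_comm (m : ℤ) k])
      omega
  rw [← himage, card_image_of_injective _ (mul_left_injective₀ hm'.ne'), Int.card_Icc]
  omega

theorem card_filter_dvd_Icc_neg_erase_zero (m N : ℕ) (hm : 0 < m) :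
    #{x ∈ (Icc (-(N : ℤ)) N).erase 0 | (m : ℤ) ∣ x} = 2 * (N / m) := by
  rw [filter_erase, card_erase_of_mem (by simp), card_filter_dvd_Icc_neg m N hm]
  rfl

end Int

theorem tendsto_card_filter_dvd_Icc_neg_div (m : ℕ) (hm : 0 < m) :
    Tendsto (fun N : ℕ => (#{x ∈ Icc (-(N : ℤ)) N | (m : ℤ) ∣ x} : ℝ) / (2 * N + 1)) atTop
      (𝓝 (1 / m)) := by
  have hm' : (0 : ℝ) < m := by exact_mod_cast hm
  have hinv : Tendsto (fun N : ℕ => (2 * (N : ℝ) + 1)⁻¹) atTop (𝓝 0) :=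
    (tendsto_natCast_atTop_atTop.const_mul_atTop two_pos).atTop_add tendsto_const_nhds
      |>.inv_tendsto_atTop
  refine tendsto_iff_norm_sub_tendsto_zero.2 <|
    squeeze_zero (fun _ => norm_nonneg _) (fun N => ?_) hinv
  rw [Int.card_filter_dvd_Icc_neg m N hm]
  have hN : (0 : ℝ) < 2 * N + 1 := by positivity
  have h₁ : (m : ℝ) * (N / m : ℕ) ≤ N := by exact_mod_cast Nat.mul_div_le N m
  have h₂ : (N : ℝ) + 1 ≤ m * (N / m : ℕ) + m := by
    exact_mod_cast (by nlinarith [Nat.lt_mul_div_succ N hm] : N + 1 ≤ m * (N / m) + m)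
  have hclose : |(2 * (N / m : ℕ) + 1 : ℝ) - (2 * N + 1) / m| ≤ 1 := by
    have hup : (2 * N + 1 : ℝ) / m ≤ 2 * (N / m : ℕ) + 2 := by rw [div_le_iff₀ hm']; linarith
    have hlow : 2 * ((N / m : ℕ) : ℝ) ≤ (2 * N + 1) / m := by rw [le_div_iff₀ hm']; linarith
    rw [abs_le]
    constructor <;> linarith
  push_cast
  rw [Real.norm_eq_abs, show (2 * (N / m : ℕ) + 1 : ℝ) / (2 * N + 1) - 1 / m
      = ((2 * (N / m : ℕ) + 1 : ℝ) - (2 * N + 1) / m) / (2 * N + 1) by field_simp,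
    abs_div, abs_of_pos hN, inv_eq_one_div]
  exact div_le_div_of_nonneg_right hclose hN.le

namespace BFree

noncomputable def cube (d N : ℕ) : Finset (Fin d → ℤ) :=
  Fintype.piFinset fun _ => Icc (-(N : ℤ)) N

variable {d : ℕ} {b : ℕ → Fin d → ℕ}

theorem card_cube_filter_forall_dvd
    (hcop : ∀ i : Fin d, ∀ m n, m ≠ n → Nat.Coprime (b m i) (b n i)) (N : ℕ) (T : Finset ℕ) :
    #{x ∈ cube d N | ∀ n ∈ T, ∀ i, (b n i : ℤ) ∣ x i} =
      ∏ i, #{y ∈ Icc (-(N : ℤ)) N | ((∏ n ∈ T, b n i : ℕ) : ℤ) ∣ y} := by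
  have hCRT : ∀ x : Fin d → ℤ,
      (∀ n ∈ T, ∀ i, (b n i : ℤ) ∣ x i) ↔ ∀ i, ((∏ n ∈ T, b n i : ℕ) : ℤ) ∣ x i := by
    refine fun x => ⟨fun h i => ?_, fun h n hn i => ?_⟩
    · rw [Nat.cast_prod]
      exact prod_dvd_of_coprime
        (fun m _ n _ hmn => Nat.isCoprime_iff_coprime.2 (hcop i m n hmn)) fun n hn => h n hn i
    · exact (Int.natCast_dvd_natCast.2 (dvd_prod_of_mem (b · i) hn)).trans (h i)
  rw [filter_congr fun x _ => hCRT x, cube]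
  exact Fin.card_filter_piFinset_forall _ _

theorem tendsto_density_forall_not_dvd (hpos : ∀ n i, 0 < b n i)
    (hcop : ∀ i : Fin d, ∀ m n, m ≠ n → Nat.Coprime (b m i) (b n i)) (M : ℕ) :
    Tendsto (fun N : ℕ =>
        (#{x ∈ cube d N | ∀ n ∈ range M, ¬∀ i, (b n i : ℤ) ∣ x i} : ℝ) / (2 * N + 1) ^ d)
      atTop (𝓝 (∏ n ∈ range M, (1 - 1 / ∏ i, (b n i : ℝ)))) := by
  have hexpand : ∀ N : ℕ,
      (#{x ∈ cube d N | ∀ n ∈ range M, ¬∀ i, (b n i : ℤ) ∣ x i} : ℝ) / (2 * N + 1) ^ d =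
        ∑ t ∈ (range M).powerset, (-1) ^ #t *
          ∏ i, (#{y ∈ Icc (-(N : ℤ)) N | ((∏ n ∈ t, b n i : ℕ) : ℤ) ∣ y} : ℝ) / (2 * N + 1) := by
    intro N
    simp only [natCast_card_filter_forall_not, card_cube_filter_forall_dvd hcop, sum_div,
      mul_div_assoc, prod_div_distrib, prod_const, card_univ, Fintype.card_fin, Nat.cast_prod]
  have hlimit : ∑ t ∈ (range M).powerset, (-1) ^ #t * ∏ i, 1 / ((∏ n ∈ t, b n i : ℕ) : ℝ) =
      ∏ n ∈ range M, (1 - 1 / ∏ i, (b n i : ℝ)) := by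
    simp only [sub_eq_add_neg, add_comm (1 : ℝ), prod_add_one, prod_neg, one_div, Nat.cast_prod,
      prod_inv_distrib]
    exact sum_congr rfl fun t _ => by rw [Finset.prod_comm]
  simp_rw [hexpand, ← hlimit]
  exact tendsto_finsetSum _ fun t _ => tendsto_const_nhds.mul <| tendsto_finsetProd _ fun i _ =>
    tendsto_card_filter_dvd_Icc_neg_div _ (prod_pos fun n _ => hpos n i)

noncomputable def cubeNoZeroCoord (d N : ℕ) : Finset (Fin d → ℤ) :=
  Fintype.piFinset fun _ => (Icc (-(N : ℤ)) N).erase 0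

theorem cubeNoZeroCoord_subset_cube (d N : ℕ) : cubeNoZeroCoord d N ⊆ cube d N :=
  Fintype.piFinset_subset _ _ fun _ => erase_subset _ _

theorem card_cube (d N : ℕ) : #(cube d N) = (2 * N + 1) ^ d := by
  rw [cube, Fintype.card_piFinset, prod_const, card_univ, Fintype.card_fin, Int.card_Icc]
  congr 1
  omega

theorem card_cubeNoZeroCoord (d N : ℕ) : #(cubeNoZeroCoord d N) = (2 * N) ^ d := by
  rw [cubeNoZeroCoord, Fintype.card_piFinset, prod_const, card_univ, Fintype.card_fin,
    card_erase_of_mem (by simp), Int.card_Icc]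
  congr 1
  omega

theorem card_cubeNoZeroCoord_filter_dvd_le {c : Fin d → ℕ} (hc : ∀ i, 0 < c i) (N : ℕ) :
    (#{x ∈ cubeNoZeroCoord d N | ∀ i, (c i : ℤ) ∣ x i} : ℝ) ≤ (2 * N) ^ d / ∏ i, (c i : ℝ) := by
  have hsplit : (2 * N : ℝ) ^ d / ∏ i, (c i : ℝ) = ∏ i, (2 * N : ℝ) / c i := by
    rw [prod_div_distrib, prod_const, card_univ, Fintype.card_fin]
  rw [cubeNoZeroCoord, Fin.card_filter_piFinset_forall, Nat.cast_prod, hsplit]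
  refine prod_le_prod (fun _ _ => Nat.cast_nonneg _) fun i _ => ?_
  rw [Int.card_filter_dvd_Icc_neg_erase_zero _ N (hc i), le_div_iff₀ (by exact_mod_cast hc i)]
  exact_mod_cast (mul_assoc 2 _ _).trans_le (Nat.mul_le_mul_left 2 (Nat.div_mul_le_self N (c i)))

open Classical in
theorem card_cubeNoZeroCoord_filter_exists_dvd_le {c : ℕ → Fin d → ℕ} (hc : ∀ k i, 0 < c k i)
    (hs : Summable fun k => 1 / ∏ i, (c k i : ℝ)) (N : ℕ) :
    (#{x ∈ cubeNoZeroCoord d N | ∃ k, ∀ i, (c k i : ℤ) ∣ x i} : ℝ) ≤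
      (2 * N) ^ d * ∑' k, 1 / ∏ i, (c k i : ℝ) := by
  set A : ℕ → Finset (Fin d → ℤ) := fun k => {x ∈ cubeNoZeroCoord d N | ∀ i, (c k i : ℤ) ∣ x i}
  have hA : ∀ k, (#(A k) : ℝ) ≤ (2 * N) ^ d * (1 / ∏ i, (c k i : ℝ)) := fun k => by
    rw [mul_one_div]
    exact card_cubeNoZeroCoord_filter_dvd_le (hc k) N
  have hAsum : Summable fun k => (#(A k) : ℝ) :=
    (hs.mul_left _).of_nonneg_of_le (fun _ => Nat.cast_nonneg _) hA
  rw [← tsum_mul_left]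
  refine (card_le_tsum_card _ A (fun x hx => ?_) hAsum).trans
    (hAsum.tsum_le_tsum hA (hs.mul_left _))
  obtain ⟨k, hk⟩ := (mem_filter.1 hx).2
  exact ⟨k, mem_filter.2 ⟨(mem_filter.1 hx).1, hk⟩⟩

open Classical in
theorem filter_forall_not_dvd_subset (M N : ℕ) :
    {x ∈ cube d N | ∀ n ∈ range M, ¬∀ i, (b n i : ℤ) ∣ x i} ⊆
      {x ∈ cube d N | ¬∃ n, ∀ i, (b n i : ℤ) ∣ x i} ∪ (cube d N \ cubeNoZeroCoord d N) ∪
        {x ∈ cubeNoZeroCoord d N | ∃ k, ∀ i, (b (k + M) i : ℤ) ∣ x i} := by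
  intro x hx
  rw [mem_filter] at hx
  simp only [mem_union, Finset.mem_sdiff, mem_filter]
  by_cases hfree : ∃ n, ∀ i, (b n i : ℤ) ∣ x i
  · obtain ⟨n, hn⟩ := hfree
    have hMn : M ≤ n := not_lt.1 fun h => hx.2 n (mem_range.2 h) hn
    by_cases hx₀ : x ∈ cubeNoZeroCoord d N
    · exact Or.inr ⟨hx₀, n - M, by rwa [Nat.sub_add_cancel hMn]⟩
    · exact Or.inl (Or.inr ⟨hx.1, hx₀⟩)
  · exact Or.inl (Or.inl ⟨hx.1, hfree⟩)

theorem card_cube_sdiff_cubeNoZeroCoord (d N : ℕ) :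
    (#(cube d N \ cubeNoZeroCoord d N) : ℝ) = (2 * N + 1) ^ d - (2 * N) ^ d := by
  rw [card_sdiff_of_subset (cubeNoZeroCoord_subset_cube d N),
    Nat.cast_sub (card_le_card (cubeNoZeroCoord_subset_cube d N)), card_cube, card_cubeNoZeroCoord]
  push_cast
  ring

open Classical in
theorem card_filter_forall_not_dvd_le (hpos : ∀ n i, 0 < b n i)
    (hs : Summable fun n => 1 / ∏ i, (b n i : ℝ)) (M N : ℕ) :
    (#{x ∈ cube d N | ∀ n ∈ range M, ¬∀ i, (b n i : ℤ) ∣ x i} : ℝ) ≤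
      #{x ∈ cube d N | ¬∃ n, ∀ i, (b n i : ℤ) ∣ x i} + ((2 * N + 1) ^ d - (2 * N) ^ d) +
        (2 * N) ^ d * ∑' k, 1 / ∏ i, (b (k + M) i : ℝ) := by
  set F := {x ∈ cube d N | ¬∃ n, ∀ i, (b n i : ℤ) ∣ x i}
  set E := {x ∈ cubeNoZeroCoord d N | ∃ k, ∀ i, (b (k + M) i : ℤ) ∣ x i}
  rw [← card_cube_sdiff_cubeNoZeroCoord]
  calc _ ≤ (#(F ∪ (cube d N \ cubeNoZeroCoord d N) ∪ E) : ℝ) :=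
        mod_cast card_le_card (filter_forall_not_dvd_subset M N)
    _ ≤ #F + #(cube d N \ cubeNoZeroCoord d N) + #E :=
        mod_cast (card_union_le _ _).trans (Nat.add_le_add_right (card_union_le _ _) _)
    _ ≤ _ := by
        gcongr
        exact card_cubeNoZeroCoord_filter_exists_dvd_le (fun k => hpos (k + M))
          ((summable_nat_add_iff M).2 hs) N

open Classical in
theorem density_not_exists_dvd_le (M N : ℕ) :
    (#{x ∈ cube d N | ¬∃ n, ∀ i, (b n i : ℤ) ∣ x i} : ℝ) / (2 * N + 1) ^ d ≤
      #{x ∈ cube d N | ∀ n ∈ range M, ¬∀ i, (b n i : ℤ) ∣ x i} / (2 * N + 1) ^ d := by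
  gcongr
  exact fun hx n _ hn => hx ⟨n, hn⟩

open Classical in
theorem density_forall_not_dvd_sub_le (hpos : ∀ n i, 0 < b n i)
    (hs : Summable fun n => 1 / ∏ i, (b n i : ℝ)) (M N : ℕ) :
    (#{x ∈ cube d N | ∀ n ∈ range M, ¬∀ i, (b n i : ℤ) ∣ x i} : ℝ) / (2 * N + 1) ^ d -
        #{x ∈ cube d N | ¬∃ n, ∀ i, (b n i : ℤ) ∣ x i} / (2 * N + 1) ^ d ≤
      ∑' k, 1 / ∏ i, (b (k + M) i : ℝ) + (1 - (2 * N / (2 * N + 1)) ^ d) := by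
  have ht : 0 ≤ ∑' k, 1 / ∏ i, (b (k + M) i : ℝ) := tsum_nonneg fun k => by positivity
  have hD : (0 : ℝ) < (2 * N + 1) ^ d := by positivity
  have hcube : (2 * N : ℝ) ^ d ≤ (2 * N + 1) ^ d :=
    pow_le_pow_left₀ (by positivity) (by linarith) d
  have hcard := card_filter_forall_not_dvd_le hpos hs M N
  rw [div_pow, ← sub_div, div_le_iff₀ hD, add_mul, sub_mul, one_mul, div_mul_cancel₀ _ hD.ne']
  nlinarith [mul_le_mul_of_nonneg_right hcube ht]

end BFree

open Classical in
theorem multidim_bfree_density_general (d : ℕ) (b : ℕ → Fin d → ℕ)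
    (hpos : ∀ n i, 0 < b n i)
    (hcop : ∀ i : Fin d, ∀ m n, m ≠ n → Nat.Coprime (b m i) (b n i)) :
    Tendsto
      (fun N : ℕ =>
        (((Fintype.piFinset fun _ : Fin d => Finset.Icc (-(N : ℤ)) (N : ℤ)).filter
          (fun x : Fin d → ℤ => ¬ ∃ n : ℕ, ∀ i : Fin d, (b n i : ℤ) ∣ x i)).card : ℝ)
          / (2 * N + 1) ^ d)
      atTop
      (nhds (∏' n : ℕ, (1 - 1 / ∏ i : Fin d, (b n i : ℝ)))) := by
  have ha₀ : ∀ n, 0 ≤ 1 / ∏ i, (b n i : ℝ) := fun n => by positivity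
  have ha₁ : ∀ n, 1 / ∏ i, (b n i : ℝ) ≤ 1 := fun n =>
    div_le_one_of_le₀ (one_le_prod fun i _ => by exact_mod_cast hpos n i) (by positivity)
  have hP := (Real.multipliable_of_nonneg_of_le_one (fun n => sub_nonneg.2 (ha₁ n))
    fun n => sub_le_self _ (ha₀ n)).tendsto_prod_tprod_nat
  have hg := BFree.tendsto_density_forall_not_dvd hpos hcop
  by_cases hs : Summable fun n => 1 / ∏ i, (b n i : ℝ)
  · have hδ : Tendsto (fun N : ℕ => 1 - ((2 * N : ℝ) / (2 * N + 1)) ^ d) atTop (𝓝 0) := by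
      have h : Tendsto (fun N : ℕ => (2 * N : ℝ) / (2 * N + 1)) atTop (𝓝 1) :=
        (tendsto_natCast_div_add_atTop (1 / 2 : ℝ)).congr fun N => by field_simp
      simpa using (tendsto_const_nhds (x := (1 : ℝ))).sub (h.pow d)
    exact tendsto_of_approx_from_above hg hP
      (tendsto_sum_nat_add fun n => 1 / ∏ i, (b n i : ℝ)) hδ
      BFree.density_not_exists_dvd_le (BFree.density_forall_not_dvd_sub_le hpos hs)
  · have hL := tendsto_nhds_unique hP (tendsto_prod_range_one_sub_of_not_summable ha₀ ha₁ hs)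
    rw [hL] at hP ⊢
    exact tendsto_order.2 ⟨fun a ha => Eventually.of_forall fun N => ha.trans_le (by positivity),
      fun a ha => eventually_lt_of_le_approx hg hP BFree.density_not_exists_dvd_le ha⟩

open Classical in
/-- Let `d ≥ 2` and for each coordinate `i` let `(b n i)ₙ` be a sequence of
pairwise coprime positive integers.  Then the set
`ℤ^d \ ⋃ₙ (bₙ₁ℤ × ⋯ × bₙdℤ)` has density `∏ₙ (1 − 1/(bₙ₁⋯bₙd))` along the
boxes `{−N, …, N}^d`. -/
theorem multidim_bfree_density (d : ℕ) (hd : 2 ≤ d) (b : ℕ → Fin d → ℕ)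
    (hpos : ∀ n i, 0 < b n i)
    (hcop : ∀ i : Fin d, ∀ m n, m ≠ n → Nat.Coprime (b m i) (b n i)) :
    Tendsto
      (fun N : ℕ =>
        (((Fintype.piFinset fun _ : Fin d => Finset.Icc (-(N : ℤ)) (N : ℤ)).filter
          (fun x : Fin d → ℤ => ¬ ∃ n : ℕ, ∀ i : Fin d, (b n i : ℤ) ∣ x i)).card : ℝ)
          / (2 * N + 1) ^ d)
      atTop
      (nhds (∏' n : ℕ, (1 - 1 / ∏ i : Fin d, (b n i : ℝ)))) :=
  multidim_bfree_density_general d b hpos hcop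
end

section
/- For n ∈ ℕ let Γ(n) denote the principal congruence subgroup of SL₂(ℤ), i.e., the kernel of the entrywise reduction homomorphism SL₂(ℤ) → SL₂(ℤ/nℤ). Let (b_n)_{n∈ℕ} be a sequence of pairwise coprime positive integers. Then A = SL₂(ℤ) \ ⋃_{n∈ℕ} Γ(b_n) is not piecewise syndetic in the group SL₂(ℤ). -/
/-- `SL₂(ℤ)`. -/
abbrev SL2Z := Matrix.SpecialLinearGroup (Fin 2) ℤ

/-- The principal congruence subgroup `Γ(n)`: the kernel of entrywise
reduction `SL₂(ℤ) → SL₂(ℤ/nℤ)`. -/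
def GammaSL (n : ℕ) : Subgroup SL2Z :=
  (Matrix.SpecialLinearGroup.map (n := Fin 2) (Int.castRingHom (ZMod n))).ker

/-!
Give each `h ∈ H` its own index `e h`, hence its own modulus `b (e h)`. For coprime `m, n` the
normal subgroup `Γ(m) Γ(n)` contains `T`, hence also `S`, so it is all of `SL₂(ℤ)`; by induction
`SL₂(ℤ)` maps onto `∏ h, SL₂(ℤ) ⧸ Γ(b (e h))`, and a finite set `F` of representatives realises
every residue datum. If `F g ⊆ H⁻¹ A`, choose `f ∈ F` with `f ≡ h⁻¹ g⁻¹` modulo `b (e h)` for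
every `h ∈ H`: then each `h f g` lies in `Γ(b (e h))`, so none of them lies in `A`.
-/

open CongruenceSubgroup ModularGroup

attribute [local instance] Gamma_normal

section Group

variable {G ι : Type*} [Group G]

theorem Thick.exists_forall_mul_mem_of_finite {A : Set G} (hA : Thick A) {α : Type*} [Finite α]
    (r : α → G) : ∃ g, ∀ a, r a * g ∈ A := by
  classical
  have := Fintype.ofFinite α
  obtain ⟨g, hg⟩ := hA (Finset.univ.image r)
  exact ⟨g, fun a => hg _ (Finset.mem_image_of_mem r (Finset.mem_univ a))⟩

theorem not_piecewiseSyndetic_compl_iUnion [Infinite ι] (N : ι → Subgroup G)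
    [∀ i, (N i).Normal] [∀ i, (N i).FiniteIndex]
    (hcrt : ∀ (s : Finset ι) (y : ι → G), ∃ x, ∀ i ∈ s, x⁻¹ * y i ∈ N i) :
    ¬ PiecewiseSyndetic (Set.univ \ ⋃ i, (N i : Set G)) := by
  rintro ⟨H, hH⟩
  obtain ⟨e⟩ : Nonempty (H ↪ ι) :=
    (Function.Embedding.total H ι).resolve_right fun ⟨f⟩ => isEmptyElim f
  set s := Finset.univ.map e
  let K := ⨅ i ∈ s, N i
  have : K.FiniteIndex := Subgroup.finiteIndex_iInf' N fun i _ => inferInstance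
  obtain ⟨g, hg⟩ := hH.exists_forall_mul_mem_of_finite (fun q : G ⧸ K => q.out)
  obtain ⟨x, hx⟩ := hcrt s (Function.extend e (fun h => (h : G)⁻¹ * g⁻¹) 1)
  set f := (x : G ⧸ K).out
  obtain ⟨h, hh, hA⟩ := hg x
  set i := e ⟨h, hh⟩
  have hs : i ∈ s := Finset.mem_map_of_mem e (Finset.mem_univ _)
  have hfx : f⁻¹ * x ∈ N i := Subgroup.mem_iInf.mp
    (Subgroup.mem_iInf.mp (QuotientGroup.eq.mp (QuotientGroup.out_eq' _) : f⁻¹ * x ∈ K) i) hs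
  have hxh : x⁻¹ * ((h : G)⁻¹ * g⁻¹) ∈ N i := by
    simpa [i, e.injective.extend_apply] using hx i hs
  have hfh : (h * (f * g))⁻¹ ∈ N i := by
    simpa [mul_assoc] using Subgroup.Normal.conj_mem inferInstance _ (mul_mem hfx hxh) g⁻¹
  exact hA.2 (Set.mem_iUnion.mpr ⟨i, inv_mem_iff.mp hfh⟩)

end Group

theorem Gamma_le_Gamma_of_dvd {m n : ℕ} (h : m ∣ n) : Gamma n ≤ Gamma m := by
  intro γ hγ
  have hmap : Matrix.SpecialLinearGroup.map (Int.castRingHom (ZMod m)) γ =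
      Matrix.SpecialLinearGroup.map (ZMod.castHom h (ZMod m))
        (Matrix.SpecialLinearGroup.map (Int.castRingHom (ZMod n)) γ) := by
    ext i j
    simp
  rw [Gamma_mem', hmap, Gamma_mem'.mp hγ, map_one]

theorem T_mem_Gamma_sup_Gamma {m n : ℕ} (h : m.Coprime n) : T ∈ Gamma m ⊔ Gamma n := by
  obtain ⟨u, v, huv⟩ := Nat.isCoprime_iff_coprime.mpr h
  have hm := ModularGroup_T_pow_mem_Gamma m (u * m) (dvd_mul_left _ _)
  have hn := ModularGroup_T_pow_mem_Gamma n (v * n) (dvd_mul_left _ _)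
  rw [Int.natAbs_natCast] at hm hn
  simpa [← zpow_add, huv] using Subgroup.mul_mem_sup hm hn

theorem normalSubgroup_eq_top_of_T_mem {N : Subgroup SL2Z} [N.Normal] (hT : T ∈ N) : N = ⊤ := by
  -- `S * T⁻¹ * S⁻¹ = !![1, 0; 1, 1]`, and conjugating that by `T⁻¹` gives `S`.
  have hS : S = T⁻¹ * (S * T⁻¹ * S⁻¹) * T⁻¹ := by
    ext i j
    fin_cases i <;> fin_cases j <;>
      simp [coe_S, coe_T, Matrix.adjugate_fin_two, Matrix.SpecialLinearGroup.coe_mul,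
        Matrix.mul_apply, Fin.sum_univ_two]
  have hS_mem : S ∈ N := by
    rw [hS]
    exact mul_mem (mul_mem (inv_mem hT) (‹N.Normal›.conj_mem _ (inv_mem hT) S)) (inv_mem hT)
  rw [eq_top_iff, ← SpecialLinearGroup.SL2Z_generators, Subgroup.closure_le]
  rintro _ (rfl | rfl) <;> assumption

theorem Gamma_sup_Gamma_eq_top {m n : ℕ} (h : m.Coprime n) : Gamma m ⊔ Gamma n = ⊤ :=
  normalSubgroup_eq_top_of_T_mem (T_mem_Gamma_sup_Gamma h)

theorem exists_forall_inv_mul_mem_Gamma {ι : Type*} [DecidableEq ι] {b : ι → ℕ}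
    (hb : Pairwise fun i j => (b i).Coprime (b j)) (s : Finset ι) (y : ι → SL2Z) :
    ∃ x, ∀ i ∈ s, x⁻¹ * y i ∈ Gamma (b i) := by
  induction s using Finset.induction_on with
  | empty => exact ⟨1, by simp⟩
  | insert a s ha ih =>
    obtain ⟨x, hx⟩ := ih
    have hcop : (∏ j ∈ s, b j).Coprime (b a) :=
      Nat.Coprime.prod_left fun j hj => hb (ne_of_mem_of_not_mem hj ha)
    obtain ⟨c, hc, d, hd, hcd⟩ := Subgroup.mem_sup_of_normal_right.mp
      ((Gamma_sup_Gamma_eq_top hcop).symm ▸ Subgroup.mem_top (x⁻¹ * y a))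
    refine ⟨x * c, Finset.forall_mem_insert _ _ _ |>.mpr ⟨?_, fun i hi => ?_⟩⟩
    · rwa [mul_inv_rev, mul_assoc, ← hcd, inv_mul_cancel_left]
    · rw [mul_inv_rev, mul_assoc]
      exact mul_mem (inv_mem (Gamma_le_Gamma_of_dvd (Finset.dvd_prod_of_mem b hi) hc)) (hx i hi)

/-- If `(b n)` is a sequence of pairwise coprime positive integers, then
`SL₂(ℤ) \ ⋃ₙ Γ(bₙ)` is not piecewise syndetic in `SL₂(ℤ)`. -/
theorem sl2z_not_piecewiseSyndetic (b : ℕ → ℕ) (hpos : ∀ n, 0 < b n)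
    (hcop : ∀ m n, m ≠ n → Nat.Coprime (b m) (b n)) :
    ¬ PiecewiseSyndetic (Set.univ \ ⋃ n, (GammaSL (b n) : Set SL2Z)) := by
  have : ∀ n, NeZero (b n) := fun n => ⟨(hpos n).ne'⟩
  exact not_piecewiseSyndetic_compl_iUnion (fun n => Gamma (b n))
    (exists_forall_inv_mul_mem_Gamma fun m n => hcop m n)
end

section
/- Let G be a countably infinite group and let A ⊆ G be an anti-recurrence (AR) set, i.e., for every g ∈ G the shift gA = {ga : a ∈ A} is not a set of measurable recurrence. Then A is not piecewise syndetic. -/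
open MeasureTheory

/-- `A ⊆ G` is a set of measurable recurrence if for every measure-preserving
action of `G` on a probability space `(X, μ)` and every measurable `Y` with
`μ(Y) > 0` there is `g ∈ A`, `g ≠ 1`, with `μ(Y ∩ T_g⁻¹ Y) > 0`. -/
def IsRecurrenceSet {G : Type*} [Group G] (A : Set G) : Prop :=
  ∀ (X : Type) (_ : MeasurableSpace X) (μ : Measure X),
    IsProbabilityMeasure μ →
    ∀ T : G → X → X,
      (∀ g h : G, T (g * h) = T g ∘ T h) →
      (∀ g : G, MeasurePreserving (T g) μ μ) →
      ∀ Y : Set X, MeasurableSet Y → 0 < μ Y →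
        ∃ g ∈ A, g ≠ 1 ∧ 0 < μ (Y ∩ T g ⁻¹' Y)

/-!
If `A` were piecewise syndetic, `H⁻¹A = ⋃_{h ∈ H} h⁻¹A` would be thick for a finite `H`. Sets that
are not sets of recurrence are closed under finite unions (run the witnessing systems side by side
in the product system), so `H⁻¹A` would not be a set of recurrence. But in an infinite group every
thick set is one: it contains all quotients `gᵢ gⱼ⁻¹ ≠ 1`, `i < j < n`, of a suitable sequence, and
for `n > 1 / μ Y` two of the sets `T_{gᵢ}⁻¹ Y` must overlap in positive measure.
-/

section

open Pointwise

variable {G : Type*} [Group G]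

theorem Thick.diff_one [Infinite G] {B : Set G} (hB : Thick B) : Thick (B \ {1}) := by
  classical
  intro F
  obtain ⟨x, hx⟩ := Infinite.exists_notMem_finset (F⁻¹ * F)
  obtain ⟨g, hg⟩ := hB (F ∪ F.image (· * x))
  -- As `x ∉ F⁻¹F`, the products `F g` and `F x g` cannot both contain `1`.
  by_cases hF : ∃ f₀ ∈ F, f₀ * g = 1
  · obtain ⟨f₀, hf₀, hf₀g⟩ := hF
    refine ⟨x * g, fun f hf => ⟨?_, fun hfxg => hx ?_⟩⟩
    · simpa [mul_assoc] using hg (f * x) (Finset.mem_union_right _ (Finset.mem_image_of_mem _ hf))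
    · rw [Set.mem_singleton_iff, eq_inv_of_mul_eq_one_right hf₀g] at hfxg
      rw [mul_inv_eq_iff_eq_mul.mp (eq_inv_of_mul_eq_one_right hfxg)]
      exact Finset.mul_mem_mul (Finset.inv_mem_inv hf) hf₀
  · exact ⟨g, fun f hf => ⟨hg f (Finset.mem_union_left _ hf), fun hfg => hF ⟨f, hf, hfg⟩⟩⟩

theorem Thick.exists_mul_inv_mem {B : Set G} (hB : Thick B) (n : ℕ) :
    ∃ f : ℕ → G, ∀ i j, i < j → j < n → f i * (f j)⁻¹ ∈ B := by
  classical
  induction n with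
  | zero => exact ⟨1, fun _ _ _ hj => absurd hj (Nat.not_lt_zero _)⟩
  | succ n ih =>
    obtain ⟨f, hf⟩ := ih
    obtain ⟨g, hg⟩ := hB ((Finset.range n).image f)
    refine ⟨Function.update f n g⁻¹, fun i j hij hjn => ?_⟩
    rcases Nat.lt_succ_iff_lt_or_eq.mp hjn with hj | rfl
    · rw [Function.update_of_ne (by omega), Function.update_of_ne hj.ne]
      exact hf i j hij hj
    · rw [Function.update_of_ne hij.ne, Function.update_self, inv_inv]
      exact hg _ (Finset.mem_image_of_mem f (Finset.mem_range.2 hij))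

theorem exists_measure_inter_ne_zero_of_measure_univ_lt_sum_measure {α ι : Type*}
    [MeasurableSpace α] (μ : Measure α) {s : Finset ι} {t : ι → Set α}
    (h : ∀ i ∈ s, NullMeasurableSet (t i) μ) (H : μ Set.univ < ∑ i ∈ s, μ (t i)) :
    ∃ i ∈ s, ∃ j ∈ s, i ≠ j ∧ μ (t i ∩ t j) ≠ 0 := by
  contrapose! H
  exact sum_measure_le_measure_univ h fun i hi j hj hij => H i hi j hj hij

section Action

variable {X : Type*} [MeasurableSpace X] {μ : Measure X} {T : G → X → X}

theorem exists_lt_measure_inter_preimage_mul_inv_pos [IsProbabilityMeasure μ]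
    (hT : ∀ g h, T (g * h) = T g ∘ T h) (hμ : ∀ g, MeasurePreserving (T g) μ μ)
    {Y : Set X} (hY : MeasurableSet Y) (f : ℕ → G) {n : ℕ} (hn : 1 < n * μ Y) :
    ∃ i j, i < j ∧ j < n ∧ 0 < μ (Y ∩ T (f i * (f j)⁻¹) ⁻¹' Y) := by
  have hinter : ∀ i j, μ (T (f j) ⁻¹' Y ∩ T (f i) ⁻¹' Y) = μ (Y ∩ T (f i * (f j)⁻¹) ⁻¹' Y) := by
    intro i j
    rw [← (hμ (f j)).measure_preimage (hY.inter ((hμ _).measurable hY)).nullMeasurableSet,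
      Set.preimage_inter, ← Set.preimage_comp, ← hT, inv_mul_cancel_right]
  obtain ⟨i, hi, j, hj, hij, hpos⟩ :=
    exists_measure_inter_ne_zero_of_measure_univ_lt_sum_measure μ (s := Finset.range n)
      (t := fun i => T (f i) ⁻¹' Y) (fun i _ => ((hμ _).measurable hY).nullMeasurableSet)
      (by simpa [(hμ _).measure_preimage hY.nullMeasurableSet] using hn)
  rcases hij.lt_or_gt with hij | hji
  · exact ⟨i, j, hij, Finset.mem_range.1 hj,
      by rw [← hinter, Set.inter_comm]; exact pos_iff_ne_zero.2 hpos⟩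
  · exact ⟨j, i, hji, Finset.mem_range.1 hi, by rw [← hinter]; exact pos_iff_ne_zero.2 hpos⟩

end Action

theorem Thick.isRecurrenceSet [Infinite G] {B : Set G} (hB : Thick B) : IsRecurrenceSet B := by
  intro X _ μ _ T hT hμ Y hY hYpos
  obtain ⟨n, hn⟩ := ENNReal.exists_nat_mul_gt hYpos.ne' ENNReal.one_ne_top
  obtain ⟨f, hf⟩ := hB.diff_one.exists_mul_inv_mem n
  obtain ⟨i, j, hij, hjn, hpos⟩ := exists_lt_measure_inter_preimage_mul_inv_pos hT hμ hY f hn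
  exact ⟨_, (hf i j hij hjn).1, (hf i j hij hjn).2, hpos⟩

theorem IsRecurrenceSet.mono {A B : Set G} (hA : IsRecurrenceSet A) (hAB : A ⊆ B) :
    IsRecurrenceSet B := fun X _ μ hprob T hT hμ Y hY hYpos =>
  let ⟨g, hg, hg₁, hpos⟩ := hA X _ μ hprob T hT hμ Y hY hYpos
  ⟨g, hAB hg, hg₁, hpos⟩

theorem not_isRecurrenceSet_empty : ¬ IsRecurrenceSet (∅ : Set G) := fun h => by
  obtain ⟨g, hg, -⟩ := h Unit _ (Measure.dirac ()) inferInstance (fun _ => id) (fun _ _ => rfl)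
    (fun _ => MeasurePreserving.id _) Set.univ MeasurableSet.univ (by simp)
  exact hg

theorem IsRecurrenceSet.of_union {A B : Set G} (h : IsRecurrenceSet (A ∪ B)) :
    IsRecurrenceSet A ∨ IsRecurrenceSet B := by
  by_contra! hAB
  obtain ⟨hA, hB⟩ := hAB
  unfold IsRecurrenceSet at hA hB
  push Not at hA hB
  obtain ⟨X₁, _, μ₁, _, T₁, hT₁, hμ₁, Y₁, hY₁, hY₁pos, hA⟩ := hA
  obtain ⟨X₂, _, μ₂, _, T₂, hT₂, hμ₂, Y₂, hY₂, hY₂pos, hB⟩ := hB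
  obtain ⟨g, hg, hg₁, hpos⟩ := h (X₁ × X₂) _ (μ₁.prod μ₂) inferInstance
    (fun g => Prod.map (T₁ g) (T₂ g)) (fun g k => by rw [hT₁, hT₂]; rfl)
    (fun g => (hμ₁ g).prod (hμ₂ g)) (Y₁ ×ˢ Y₂) (hY₁.prod hY₂)
    (by rw [Measure.prod_prod]; exact ENNReal.mul_pos hY₁pos.ne' hY₂pos.ne')
  rw [Set.preimage_prod_map_prod, Set.prod_inter_prod, Measure.prod_prod] at hpos
  rcases hg with hgA | hgB
  · exact hpos.not_ge (by rw [nonpos_iff_eq_zero.1 (hA g hgA hg₁), zero_mul])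
  · exact hpos.not_ge (by rw [nonpos_iff_eq_zero.1 (hB g hgB hg₁), mul_zero])

theorem IsRecurrenceSet.exists_of_biUnion {ι : Type*} {s : Finset ι} {B : ι → Set G}
    (h : IsRecurrenceSet (⋃ i ∈ s, B i)) : ∃ i ∈ s, IsRecurrenceSet (B i) := by
  classical
  induction s using Finset.induction_on with
  | empty => exact absurd (by simpa using h) not_isRecurrenceSet_empty
  | insert a s _ ih =>
    rw [Finset.set_biUnion_insert] at h
    rcases h.of_union with ha | hs
    · exact ⟨a, Finset.mem_insert_self a s, ha⟩
    · obtain ⟨i, hi, hBi⟩ := ih hs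
      exact ⟨i, Finset.mem_insert_of_mem hi, hBi⟩

end

theorem ar_not_piecewiseSyndetic_general {G : Type*} [Group G] [Infinite G]
    (A : Set G) (hAR : ∀ g : G, ¬ IsRecurrenceSet ((fun a => g * a) '' A)) :
    ¬ PiecewiseSyndetic A := by
  rintro ⟨H, hH⟩
  have hcover : {x : G | ∃ h ∈ H, h * x ∈ A} ⊆ ⋃ h ∈ H, (fun a => h⁻¹ * a) '' A := by
    rintro x ⟨h, hh, hx⟩
    exact Set.mem_biUnion hh ⟨h * x, hx, inv_mul_cancel_left h x⟩
  obtain ⟨h, -, hrec⟩ := (hH.isRecurrenceSet.mono hcover).exists_of_biUnion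
  exact hAR h⁻¹ hrec

/-- If `A` is an anti-recurrence set (no shift `gA` is a set of measurable
recurrence), then `A` is not piecewise syndetic. -/
theorem ar_not_piecewiseSyndetic {G : Type*} [Group G] [Countable G] [Infinite G]
    (A : Set G) (hAR : ∀ g : G, ¬ IsRecurrenceSet ((fun a => g * a) '' A)) :
    ¬ PiecewiseSyndetic A :=
  ar_not_piecewiseSyndetic_general A hAR
end

section
/- Let G be a countably infinite semigroup and give {0,1}^G the product topology, with G acting on {0,1}^G by (g·α)(x) = α(xg). Identify each α ∈ {0,1}^G with the subset α⁻¹(1) ⊆ G, and call α syndetic (respectively piecewise syndetic) when α⁻¹(1) is. For α ∈ {0,1}^G let 𝒪(α) denote the closure of the orbit {g·α : g ∈ G}. Then α is piecewise syndetic if and only if 𝒪(α) contains a nonempty closed G-invariant subset Y which is minimal (i.e., Y has no proper nonempty closed G-invariant subset) and which is not equal to {𝟘}, where 𝟘 denotes the identically-zero function. -/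
open Set Topology


/-- The shift action of `G` on `{0,1}^G`: `(g·α)(x) = α(xg)`. -/
def shiftAct {G : Type*} [Semigroup G] (g : G) (α : G → Bool) : G → Bool :=
  fun x => α (x * g)

section aux
variable {G : Type*} [Semigroup G]

lemma shift_shift (g g' : G) (α : G → Bool) :
    shiftAct g (shiftAct g' α) = shiftAct (g * g') α := by
  funext x; simp [shiftAct, mul_assoc]

lemma continuous_shift (g : G) : Continuous (shiftAct (G := G) g) :=
  continuous_pi fun x => continuous_apply (x * g)

def Orb (α : G → Bool) : Set (G → Bool) := {β | ∃ g : G, β = shiftAct g α}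

lemma closure_orb_invariant (α : G → Bool) (g : G) {β : G → Bool}
    (hβ : β ∈ closure (Orb α)) : shiftAct g β ∈ closure (Orb α) := by
  have h1 : shiftAct g β ∈ shiftAct g '' closure (Orb α) := ⟨β, hβ, rfl⟩
  have h2 : shiftAct g '' closure (Orb α) ⊆ closure (shiftAct g '' Orb α) :=
    image_closure_subset_closure_image (continuous_shift g)
  have h3 : shiftAct g '' Orb α ⊆ Orb α := by
    rintro _ ⟨γ, ⟨k, rfl⟩, rfl⟩
    exact ⟨g * k, shift_shift g k α⟩
  exact closure_mono h3 (h2 h1)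

/-- the set of configurations hitting `true` on `H * f` for each `f ∈ F` is closed -/
lemma isClosed_hitting (H : Finset G) (F : Set G) :
    IsClosed {γ : G → Bool | ∀ f ∈ F, ∃ h ∈ H, γ (h * f) = true} := by
  have : {γ : G → Bool | ∀ f ∈ F, ∃ h ∈ H, γ (h * f) = true} =
      ⋂ f ∈ F, ⋃ h ∈ H, {γ : G → Bool | γ (h * f) = true} := by
    ext γ; simp
  rw [this]
  refine isClosed_biInter fun f _ => ?_
  refine Set.Finite.isClosed_biUnion H.finite_toSet fun h _ => ?_
  exact isClosed_eq (continuous_apply _) continuous_const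

end aux


/-- An element `α ∈ {0,1}^G` is piecewise syndetic iff its orbit closure
(under the shift action, in the product topology) contains a nontrivial
minimal subsystem, i.e. a nonempty closed `G`-invariant set `Y` with no
proper nonempty closed `G`-invariant subset and `Y ≠ {𝟘}`. -/
theorem piecewiseSyndetic_iff_minimal_subsystem {G : Type*} [Semigroup G]
    [Countable G] [Infinite G] (α : G → Bool) :
    PiecewiseSyndetic {x : G | α x = true} ↔
      ∃ Y : Set (G → Bool),
        Y ⊆ closure {β : G → Bool | ∃ g : G, β = shiftAct g α} ∧
        Y.Nonempty ∧ IsClosed Y ∧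
        (∀ g : G, ∀ β ∈ Y, shiftAct g β ∈ Y) ∧
        (∀ Z : Set (G → Bool), Z ⊆ Y → Z.Nonempty → IsClosed Z →
          (∀ g : G, ∀ β ∈ Z, shiftAct g β ∈ Z) → Z = Y) ∧
        Y ≠ {fun _ => false} := by
  classical
  obtain ⟨g₀⟩ : Nonempty G := inferInstance
  have horb : closure {β : G → Bool | ∃ g : G, β = shiftAct g α} = closure (Orb α) := rfl
  constructor
  · rintro ⟨H, hT⟩
    set K := closure (Orb α) with hK
    have hKcl : IsClosed K := isClosed_closure
    -- directed family
    set Z : Finset G → Set (G → Bool) :=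
      fun F => K ∩ {γ : G → Bool | ∀ f ∈ (F : Set G), ∃ h ∈ H, γ (h * f) = true} with hZ
    have hZne : ∀ F, (Z F).Nonempty := by
      intro F
      obtain ⟨g, hg⟩ := hT F
      refine ⟨shiftAct g α, subset_closure ⟨g, rfl⟩, ?_⟩
      intro f hf
      obtain ⟨h, hh, hha⟩ := hg f hf
      exact ⟨h, hh, by simpa [shiftAct, mul_assoc] using hha⟩
    have hZcl : ∀ F, IsClosed (Z F) := fun F =>
      hKcl.inter (isClosed_hitting H (F : Set G))
    have hZdir : Directed (· ⊇ ·) Z := by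
      intro F F'
      refine ⟨F ∪ F', fun γ hγ => ⟨hγ.1, fun f hf => hγ.2 f (by simp [hf])⟩,
        fun γ hγ => ⟨hγ.1, fun f hf => hγ.2 f (by simp [hf])⟩⟩
    obtain ⟨β, hβ⟩ :=
      IsCompact.nonempty_iInter_of_directed_nonempty_isCompact_isClosed Z hZdir hZne
        (fun F => (hZcl F).isCompact) hZcl
    have hβK : β ∈ K := (mem_iInter.1 hβ ∅).1
    have hβsyn : ∀ g : G, ∃ h ∈ H, β (h * g) = true := by
      intro g
      exact (mem_iInter.1 hβ {g}).2 g (by simp)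
    -- the orbit closure of β avoids 0
    set K' := closure (Orb β) with hK'
    have hK'K : K' ⊆ K := by
      rw [hK', hK]
      refine closure_minimal ?_ isClosed_closure
      rintro _ ⟨g, rfl⟩
      exact closure_orb_invariant α g hβK
    have hK'0 : (fun _ => false) ∉ K' := by
      intro h0
      have hC : K' ⊆ {γ : G → Bool | ∀ f ∈ (univ : Set G), ∃ h ∈ H, γ (h * f) = true} := by
        refine closure_minimal ?_ (isClosed_hitting H univ)
        rintro _ ⟨g, rfl⟩ f -
        obtain ⟨h, hh, hv⟩ := hβsyn (f * g)
        exact ⟨h, hh, by simpa [shiftAct, mul_assoc] using hv⟩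
      obtain ⟨h, -, hv⟩ := hC h0 g₀ (mem_univ _)
      simp at hv
    -- Zorn
    set S : Set (Set (G → Bool)) :=
      {Y | Y ⊆ K' ∧ Y.Nonempty ∧ IsClosed Y ∧ ∀ g : G, ∀ γ ∈ Y, shiftAct g γ ∈ Y} with hS
    have hK'S : K' ∈ S := by
      refine ⟨Subset.rfl, ⟨shiftAct g₀ β, subset_closure ⟨g₀, rfl⟩⟩, isClosed_closure, ?_⟩
      intro g γ hγ
      have h1 : shiftAct g γ ∈ shiftAct g '' K' := ⟨γ, hγ, rfl⟩
      have h2 : shiftAct g '' K' ⊆ closure (shiftAct g '' Orb β) :=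
        (image_closure_subset_closure_image (continuous_shift g))
      have h3 : shiftAct g '' Orb β ⊆ Orb β := by
        rintro _ ⟨δ, ⟨k, rfl⟩, rfl⟩
        exact ⟨g * k, shift_shift g k β⟩
      exact closure_mono h3 (h2 h1)
    have hub : ∀ c ⊆ S, IsChain (· ⊆ ·) c → c.Nonempty →
        ∃ lb ∈ S, ∀ s ∈ c, lb ⊆ s := by
      intro c hcS hchain hcne
      refine ⟨⋂₀ c, ⟨?_, ?_, ?_, ?_⟩, fun s hs => sInter_subset_of_mem hs⟩
      · obtain ⟨s, hs⟩ := hcne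
        exact (sInter_subset_of_mem hs).trans (hcS hs).1
      · have : Nonempty c := hcne.to_subtype
        have := IsCompact.nonempty_iInter_of_directed_nonempty_isCompact_isClosed
          (fun s : c => (s : Set (G → Bool)))
          (by
            intro s t
            rcases hchain.total s.2 t.2 with h | h
            · exact ⟨s, Subset.rfl, h⟩
            · exact ⟨t, h, Subset.rfl⟩)
          (fun s => (hcS s.2).2.1) (fun s => (hcS s.2).2.2.1.isCompact)
          (fun s => (hcS s.2).2.2.1)
        rwa [sInter_eq_iInter]
      · exact isClosed_sInter fun s hs => (hcS hs).2.2.1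
      · intro g γ hγ
        exact mem_sInter.2 fun s hs => (hcS hs).2.2.2 g γ (mem_sInter.1 hγ s hs)
    obtain ⟨m, -, hmS, hmmin⟩ :
        ∃ m, m ⊆ K' ∧ m ∈ S ∧ ∀ z ∈ S, z ⊆ m → z = m := by
      obtain ⟨m, hm1, hm2⟩ := zorn_superset_nonempty S hub K' hK'S
      exact ⟨m, hm1, hm2.1, fun z hz hzm => subset_antisymm hzm (hm2.2 hz hzm)⟩
    refine ⟨m, ?_, hmS.2.1, hmS.2.2.1, hmS.2.2.2, ?_, ?_⟩
    · rw [horb]; exact hmS.1.trans hK'K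
    · intro Zs hZm hZne hZcl hZinv
      exact hmmin Zs ⟨hZm.trans hmS.1, hZne, hZcl, hZinv⟩ hZm
    · intro hm0
      exact hK'0 (hmS.1 (hm0 ▸ rfl : (fun _ => false) ∈ m))
  · rintro ⟨Y, hYsub, ⟨β, hβY⟩, hYcl, hYinv, hYmin, hYne⟩
    rw [horb] at hYsub
    -- 0 ∉ Y
    have h0Y : (fun _ : G => false) ∉ Y := by
      intro h0
      apply hYne
      refine (hYmin {fun _ => false} (singleton_subset_iff.2 h0) ⟨_, rfl⟩
        isClosed_singleton ?_).symm
      rintro g β hβ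
      simp only [mem_singleton_iff] at hβ ⊢
      subst hβ; rfl
    -- supp β is syndetic
    have hsyn : ∃ H : Finset G, ∀ g : G, ∃ h ∈ H, β (h * g) = true := by
      by_contra hcon
      push_neg at hcon
      apply h0Y
      have hOβ : closure (Orb β) ⊆ Y := by
        refine closure_minimal ?_ hYcl
        rintro _ ⟨g, rfl⟩
        exact hYinv g β hβY
      refine hOβ ?_
      rw [mem_closure_iff]
      intro O hO h0O
      obtain ⟨I, u, hIu, hpi⟩ := isOpen_pi_iff.1 hO _ h0O
      obtain ⟨g, hg⟩ := hcon I
      refine ⟨shiftAct g β, hpi ?_, g, rfl⟩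
      intro i hi
      have : β (i * g) = false := by
        have := hg i hi
        simpa using this
      simpa [shiftAct, this] using (hIu i hi).2
    obtain ⟨H, hH⟩ := hsyn
    refine ⟨H, ?_⟩
    intro F
    -- approximate β on coordinates H * F by an orbit point of α
    have hβcl : β ∈ closure (Orb α) := hYsub hβY
    rw [mem_closure_iff] at hβcl
    set I : Finset G := Finset.image (fun p : G × G => p.1 * p.2) (H ×ˢ F) with hI
    have hUo : IsOpen ((I : Set G).pi fun i => {β i}) :=
      isOpen_set_pi I.finite_toSet fun a _ => isOpen_discrete _
    have hβU : β ∈ (I : Set G).pi fun i => {β i} := fun i _ => rfl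
    obtain ⟨γ, hγU, g, rfl⟩ := hβcl _ hUo hβU
    refine ⟨g, fun f hf => ?_⟩
    obtain ⟨h, hh, hv⟩ := hH f
    refine ⟨h, hh, ?_⟩
    have hmem : h * f ∈ (I : Set G) := by
      simp only [hI, Finset.coe_image, Finset.coe_product]
      exact ⟨(h, f), ⟨hh, hf⟩, rfl⟩
    have := hγU _ hmem
    simp only [shiftAct, mem_singleton_iff] at this
    show α (h * (f * g)) = true
    rw [← mul_assoc, this, hv]
end
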